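/- arXiv:2512.13445 — 7 statements merged into one kernel-verified Lean document; each statement's English description precedes it below -/
import Mathlib

section
/- Let F be a field, let 1 ≤ k < n with n + k odd, and let φ : M_{n×k}(F) → W_{n,k} be a linear map. Then the linear map S on M_{n×k}(F) defined by S(X) = X + φ(X) satisfies det_{n,k}(S(X)) = det_{n,k}(X) for all n×k matrices X over F. -/
open Classical in
noncomputable def cullisDet {F : Type*} [Field F] {n k : ℕ}
    (X : Matrix (Fin n) (Fin k) F) : F :=
  ∑ f : Fin k → Fin n, if StrictMono f then
    (-1 : F) ^ (∑ j : Fin k, ((f j : ℕ) - (j : ℕ))) * (X.submatrix f id).det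
  else 0

open Finset Matrix

private lemma card_filter_val_lt {m t : ℕ} (ht : t ≤ m) :
    ((Finset.univ : Finset (Fin m)).filter fun x : Fin m => (x : ℕ) < t).card = t := by
  have h : ((Finset.univ : Finset (Fin m)).filter fun x : Fin m => (x : ℕ) < t).map
      Fin.valEmbedding = Finset.range t := by
    ext a
    simp only [Finset.mem_map, Finset.mem_filter, Finset.mem_univ, true_and,
      Fin.valEmbedding_apply, Finset.mem_range]
    constructor
    · rintro ⟨x, hx, rfl⟩; exact hx
    · intro ha; exact ⟨⟨a, lt_of_lt_of_le ha ht⟩, ha, rfl⟩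
  rw [← Finset.card_map Fin.valEmbedding, h, Finset.card_range]

private lemma card_filter_fin_lt {m : ℕ} (a : Fin m) :
    (Finset.univ.filter fun x : Fin m => x < a).card = (a : ℕ) := by
  have h : (Finset.univ.filter fun x : Fin m => x < a)
      = Finset.univ.filter fun x : Fin m => (x : ℕ) < (a : ℕ) := by
    apply Finset.filter_congr; intro x _; rw [Fin.lt_def]
  rw [h, card_filter_val_lt a.isLt.le]

private lemma card_filter_lt_apply {m N : ℕ} {f : Fin m → Fin N} (hf : StrictMono f) (a : Fin m) :
    (Finset.univ.filter fun x => f x < f a).card = (a : ℕ) := by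
  have h : (Finset.univ.filter fun x => f x < f a)
      = Finset.univ.filter fun x : Fin m => (x : ℕ) < (a : ℕ) := by
    apply Finset.filter_congr; intro x _; rw [hf.lt_iff_lt, Fin.lt_def]
  rw [h, card_filter_val_lt a.isLt.le]

private lemma image_orderEmbOfFin' {n N : ℕ} (s : Finset (Fin n)) (h : s.card = N) :
    Finset.image (fun x => s.orderEmbOfFin h x) Finset.univ = s := by
  apply Finset.eq_of_subset_of_card_le
  · intro x hx
    obtain ⟨z, -, rfl⟩ := Finset.mem_image.mp hx
    exact Finset.orderEmbOfFin_mem s h z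
  · rw [Finset.card_image_of_injective _ (s.orderEmbOfFin h).injective, card_univ,
      Fintype.card_fin, h]

private lemma rank_orderEmbOfFin {n N : ℕ} (s : Finset (Fin n)) (h : s.card = N) (j : Fin N) :
    (s.filter fun x => x < s.orderEmbOfFin h j).card = (j : ℕ) := by
  have hkey : s.filter (fun x => x < s.orderEmbOfFin h j)
      = Finset.image (fun z => s.orderEmbOfFin h z) (Finset.univ.filter fun z : Fin N => z < j) := by
    ext x
    simp only [mem_filter, mem_image, mem_univ, true_and]
    constructor
    · rintro ⟨hxs, hxj⟩
      have hx' : x ∈ Finset.image (fun z => s.orderEmbOfFin h z) Finset.univ := by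
        rw [image_orderEmbOfFin' s h]; exact hxs
      obtain ⟨z, -, rfl⟩ := Finset.mem_image.mp hx'
      exact ⟨z, (s.orderEmbOfFin h).strictMono.lt_iff_lt.mp hxj, rfl⟩
    · rintro ⟨z, hz, rfl⟩
      exact ⟨Finset.orderEmbOfFin_mem s h z, (s.orderEmbOfFin h).strictMono hz⟩
  rw [hkey, Finset.card_image_of_injective _ (s.orderEmbOfFin h).injective, card_filter_fin_lt]

private lemma count_split {n k' : ℕ} {g : Fin k' → Fin n} (hg : StrictMono g) (i : Fin n) :
    (i : ℕ) = (Finset.univ.filter fun j => g j < i).card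
      + ((Finset.univ.filter fun x : Fin n => x ∉ Finset.image g Finset.univ).filter
          fun x => x < i).card := by
  classical
  have h0 : (Finset.univ.filter fun x : Fin n => x < i).card = (i : ℕ) := card_filter_fin_lt i
  have hsplit := Finset.card_filter_add_card_filter_not
    (s := Finset.univ.filter fun x : Fin n => x < i) (p := fun x => x ∈ Finset.image g Finset.univ)
  have h1 : ((Finset.univ.filter fun x : Fin n => x < i).filter
      fun x => x ∈ Finset.image g Finset.univ)
      = Finset.image g (Finset.univ.filter fun j => g j < i) := by
    ext x
    simp only [mem_filter, mem_univ, true_and, mem_image]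
    constructor
    · rintro ⟨hxi, j, rfl⟩
      exact ⟨j, hxi, rfl⟩
    · rintro ⟨j, hj, rfl⟩
      exact ⟨hj, j, rfl⟩
  have h2 : ((Finset.univ.filter fun x : Fin n => x < i).filter
      fun x => ¬ x ∈ Finset.image g Finset.univ)
      = ((Finset.univ.filter fun x : Fin n => x ∉ Finset.image g Finset.univ).filter
          fun x => x < i) := by
    rw [Finset.filter_filter, Finset.filter_filter]
    apply Finset.filter_congr; intro x _; rw [and_comm]
  have h3 : (Finset.image g (Finset.univ.filter fun j => g j < i)).card
      = (Finset.univ.filter fun j => g j < i).card :=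
    Finset.card_image_of_injective _ hg.injective
  rw [h1, h2, h3] at hsplit
  omega

private lemma sum_range_neg_one_pow {F : Type*} [Field F] (t : ℕ) :
    ∑ i ∈ Finset.range (2 * t), (-1 : F) ^ i = 0 := by
  induction t with
  | zero => simp
  | succ t ih =>
    have h : 2 * (t + 1) = (2 * t) + 1 + 1 := by ring
    rw [h, Finset.sum_range_succ, Finset.sum_range_succ, ih, pow_succ, pow_mul]
    norm_num

private lemma sum_fin_neg_one_pow {F : Type*} [Field F] {N : ℕ} (hN : Even N) :
    ∑ j : Fin N, (-1 : F) ^ (j : ℕ) = 0 := by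
  obtain ⟨t, rfl⟩ := hN
  rw [Fin.sum_univ_eq_sum_range]
  simpa [two_mul] using sum_range_neg_one_pow (F := F) t

private lemma le_of_strictMono {k n : ℕ} {f : Fin k → Fin n} (hf : StrictMono f) :
    ∀ j : Fin k, (j : ℕ) ≤ (f j : ℕ) := by
  intro ⟨j, hj⟩
  induction j with
  | zero => simp
  | succ m ih =>
    have hm : m < k := by omega
    have h1 : (⟨m, hm⟩ : Fin k) < ⟨m + 1, hj⟩ := by simp [Fin.lt_def]
    have h2 := hf h1
    have h3 := ih hm
    rw [Fin.lt_def] at h2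
    simp only [Fin.val_mk] at h2 h3 ⊢
    omega

private lemma pos_of_strictMono {k' n : ℕ} {f : Fin (k' + 1) → Fin n} (hf : StrictMono f)
    (r : Fin (k' + 1)) :
    (Finset.univ.filter fun j => f (r.succAbove j) < f r).card = (r : ℕ) := by
  have key : ∀ j : Fin k', f (r.succAbove j) < f r ↔ (j : ℕ) < (r : ℕ) := by
    intro j
    rw [hf.lt_iff_lt]
    constructor
    · intro h
      by_contra hc
      push_neg at hc
      have hle : r ≤ j.castSucc := by rw [Fin.le_def]; simpa using hc
      rw [Fin.succAbove_of_le_castSucc _ _ hle] at h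
      have : r ≤ j.succ := le_trans hle (Fin.castSucc_le_succ j)
      exact absurd h (not_lt.mpr this)
    · intro h
      have hlt : j.castSucc < r := by rw [Fin.lt_def]; simpa using h
      rwa [Fin.succAbove_of_castSucc_lt _ _ hlt]
  have h : (Finset.univ.filter fun j => f (r.succAbove j) < f r)
      = Finset.univ.filter fun j : Fin k' => (j : ℕ) < (r : ℕ) := by
    apply Finset.filter_congr; intro x _; exact key x
  rw [h, card_filter_val_lt (by omega : (r:ℕ) ≤ k')]
private lemma insert_orderEmb_facts {n k' : ℕ} {g : Fin k' → Fin n} (hg : StrictMono g)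
    {i : Fin n} (hi : i ∉ Finset.image g Finset.univ)
    (hs' : (insert i (Finset.image g Finset.univ)).card = k' + 1)
    (hpos : (Finset.univ.filter fun j => g j < i).card < k' + 1) :
    (insert i (Finset.image g Finset.univ)).orderEmbOfFin hs'
        ⟨(Finset.univ.filter fun j => g j < i).card, hpos⟩ = i ∧
      (fun x => (insert i (Finset.image g Finset.univ)).orderEmbOfFin hs'
        ((⟨(Finset.univ.filter fun j => g j < i).card, hpos⟩ : Fin (k' + 1)).succAbove x)) = g := by
  classical
  set s' := insert i (Finset.image g Finset.univ) with hs'def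
  set f' := s'.orderEmbOfFin hs' with hf'def
  have himg : Finset.image (fun x => f' x) Finset.univ = s' := image_orderEmbOfFin' s' hs'
  have hia : i ∈ Finset.image (fun x => f' x) Finset.univ := by
    rw [himg]; exact Finset.mem_insert_self _ _
  obtain ⟨a, -, ha⟩ := Finset.mem_image.mp hia
  have hcard : (Finset.image g Finset.univ).card = k' := by
    rw [Finset.card_image_of_injective _ hg.injective, card_univ, Fintype.card_fin]
  -- the composition with succAbove equals g
  have hmem' : ∀ x : Fin k', f' (a.succAbove x) ∈ Finset.image g Finset.univ := by
    intro x
    have h1 : f' (a.succAbove x) ∈ s' := Finset.orderEmbOfFin_mem s' hs' _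
    have h2 : f' (a.succAbove x) ≠ i := by
      rw [← ha]
      intro hcontra
      exact Fin.succAbove_ne a x (f'.injective hcontra)
    rcases Finset.mem_insert.mp h1 with h | h
    · exact absurd h h2
    · exact h
  have hSM : StrictMono fun x => f' (a.succAbove x) :=
    f'.strictMono.comp (Fin.strictMono_succAbove a)
  have hcomp : (fun x => f' (a.succAbove x)) = g := by
    rw [Finset.orderEmbOfFin_unique hcard hmem' hSM,
      ← Finset.orderEmbOfFin_unique hcard (fun x => Finset.mem_image_of_mem g (mem_univ x)) hg]
  -- the index a has value pos
  have haval : (a : ℕ) = (Finset.univ.filter fun j => g j < i).card := by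
    have e1 : (Finset.univ.filter fun x => f' x < f' a).card = (a : ℕ) :=
      card_filter_lt_apply f'.strictMono a
    have e2 : (Finset.univ.filter fun x => f' x < f' a)
        = Finset.image a.succAbove (Finset.univ.filter fun x => g x < i) := by
      ext x
      simp only [mem_filter, mem_univ, true_and, mem_image, ha]
      constructor
      · intro hx
        have hxa : x ≠ a := by rintro rfl; rw [ha] at hx; exact lt_irrefl _ hx
        obtain ⟨z, rfl⟩ := Fin.exists_succAbove_eq hxa
        refine ⟨z, ?_, rfl⟩
        rw [← congrFun hcomp z]; exact hx
      · rintro ⟨z, hz, rfl⟩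
        rw [congrFun hcomp z]; exact hz
    rw [e2, Finset.card_image_of_injective _ (Fin.succAbove_right_injective (p := a))] at e1
    omega
  have haeq : (⟨(Finset.univ.filter fun j => g j < i).card, hpos⟩ : Fin (k' + 1)) = a :=
    Fin.ext haval.symm
  rw [haeq]
  exact ⟨ha, hcomp⟩
private lemma insert_image_succAbove {n k' : ℕ} (f : Fin (k' + 1) → Fin n) (r : Fin (k' + 1)) :
    insert (f r) (Finset.image (f ∘ r.succAbove) Finset.univ) = Finset.image f Finset.univ := by
  ext x
  simp only [Finset.mem_insert, Finset.mem_image, Finset.mem_univ, true_and, Function.comp_apply]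
  constructor
  · rintro (rfl | ⟨z, rfl⟩)
    · exact ⟨r, rfl⟩
    · exact ⟨r.succAbove z, rfl⟩
  · rintro ⟨z, rfl⟩
    by_cases hz : z = r
    · subst hz; exact Or.inl rfl
    · obtain ⟨w, hw⟩ := Fin.exists_succAbove_eq hz
      exact Or.inr ⟨w, by rw [hw]⟩

set_option maxHeartbeats 1000000 in
open Classical in
private lemma cullisDet_eq_zero_of_const_col {F : Type*} [Field F] {n k : ℕ}
    (hk : 1 ≤ k) (hkn : k < n) (hodd : Odd (n + k))
    (X : Matrix (Fin n) (Fin k) F) (j₀ : Fin k) (c : F)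
    (hconst : ∀ i, X i j₀ = c) :
    cullisDet X = 0 := by
  obtain ⟨k', rfl⟩ : ∃ k', k = k' + 1 := ⟨k - 1, by omega⟩
  set D : (Fin k' → Fin n) → F := fun g => (X.submatrix g j₀.succAbove).det with hD
  set term : ((Fin (k' + 1) → Fin n) × Fin (k' + 1)) → F := fun p =>
    if StrictMono p.1 then
      (-1 : F) ^ (∑ j : Fin (k' + 1), ((p.1 j : ℕ) - (j : ℕ)))
        * ((-1 : F) ^ ((p.2 : ℕ) + (j₀ : ℕ)) * (c * D (p.1 ∘ p.2.succAbove)))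
    else 0 with hterm
  set G : ((Fin k' → Fin n) × Fin n) → F := fun q =>
    (-1 : F) ^ ((∑ j : Fin (k' + 1), (j : ℕ)) + (∑ j, (q.1 j : ℕ))
      + ((q.2 : ℕ) + (Finset.univ.filter fun j => q.1 j < q.2).card + (j₀ : ℕ)))
      * (c * D q.1) with hG
  -- Step 1 : expand the determinant along column j₀
  have step1 : cullisDet X = ∑ p : (Fin (k' + 1) → Fin n) × Fin (k' + 1), term p := by
    unfold cullisDet
    rw [Fintype.sum_prod_type]
    refine Finset.sum_congr rfl fun f _ => ?_
    by_cases hf : StrictMono f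
    · rw [if_pos hf]
      have hdet : (X.submatrix f id).det
          = ∑ r : Fin (k' + 1), (-1 : F) ^ ((r : ℕ) + (j₀ : ℕ)) * (c * D (f ∘ r.succAbove)) := by
        rw [Matrix.det_succ_column (X.submatrix f id) j₀]
        refine Finset.sum_congr rfl fun r _ => ?_
        rw [Matrix.submatrix_apply, id_eq, hconst, Matrix.submatrix_submatrix, Function.id_comp,
          hD]
        ring
      rw [hdet, Finset.mul_sum]
      refine Finset.sum_congr rfl fun r _ => ?_
      rw [hterm]
      simp only []
      rw [if_pos hf]
    · rw [if_neg hf]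
      symm
      refine Finset.sum_eq_zero fun r _ => ?_
      rw [hterm]
      simp only []
      rw [if_neg hf]
  -- Step 2 : only strictly monotone f contribute
  have step2 : ∑ p : (Fin (k' + 1) → Fin n) × Fin (k' + 1), term p
      = ∑ p ∈ Finset.univ.filter
          (fun p : (Fin (k' + 1) → Fin n) × Fin (k' + 1) => StrictMono p.1), term p := by
    symm
    apply Finset.sum_filter_of_ne
    intro p _ hp
    by_contra hsm
    apply hp
    rw [hterm]
    simp only []
    rw [if_neg hsm]
  -- auxiliary facts for the bijection
  have jcard : ∀ (q : (Fin k' → Fin n) × Fin n), StrictMono q.1 →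
      q.2 ∉ Finset.image q.1 Finset.univ →
      (insert q.2 (Finset.image q.1 Finset.univ)).card = k' + 1 := by
    intro q h1 h2
    rw [Finset.card_insert_of_notMem h2, Finset.card_image_of_injective _ h1.injective,
      card_univ, Fintype.card_fin]
  have jpos : ∀ (q : (Fin k' → Fin n) × Fin n),
      (Finset.univ.filter fun j => q.1 j < q.2).card < k' + 1 := by
    intro q
    have h := Finset.card_filter_le (Finset.univ : Finset (Fin k')) (fun j => q.1 j < q.2)
    simp only [card_univ, Fintype.card_fin] at h
    omega
  -- Step 3 : reindex the sum
  have step3 : ∑ p ∈ Finset.univ.filter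
        (fun p : (Fin (k' + 1) → Fin n) × Fin (k' + 1) => StrictMono p.1), term p
      = ∑ q ∈ Finset.univ.filter
          (fun q : (Fin k' → Fin n) × Fin n =>
            StrictMono q.1 ∧ q.2 ∉ Finset.image q.1 Finset.univ), G q := by
    refine Finset.sum_bij'
      (fun p _ => (p.1 ∘ p.2.succAbove, p.1 p.2))
      (fun q hq =>
        ((fun a => (insert q.2 (Finset.image q.1 Finset.univ)).orderEmbOfFin
            (jcard q (Finset.mem_filter.mp hq).2.1 (Finset.mem_filter.mp hq).2.2) a),
          ⟨(Finset.univ.filter fun j => q.1 j < q.2).card, jpos q⟩))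
      ?_ ?_ ?_ ?_ ?_
    · -- hi
      rintro ⟨f, r⟩ hp
      have hsm := (Finset.mem_filter.mp hp).2
      refine Finset.mem_filter.mpr ⟨Finset.mem_univ _, hsm.comp (Fin.strictMono_succAbove r), ?_⟩
      intro hmem
      obtain ⟨z, -, hz⟩ := Finset.mem_image.mp hmem
      exact Fin.succAbove_ne r z (hsm.injective hz)
    · -- hj
      rintro ⟨g, i⟩ hq
      refine Finset.mem_filter.mpr ⟨Finset.mem_univ _, ?_⟩
      exact ((insert i (Finset.image g Finset.univ)).orderEmbOfFin _).strictMono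
    · -- left inverse
      rintro ⟨f, r⟩ hp
      have hsm : StrictMono f := (Finset.mem_filter.mp hp).2
      have hmemf : ∀ x, f x ∈ insert (f r) (Finset.image (f ∘ r.succAbove) Finset.univ) := by
        intro x
        rw [insert_image_succAbove f r]
        exact Finset.mem_image_of_mem f (Finset.mem_univ x)
      have hnotmem : f r ∉ Finset.image (f ∘ r.succAbove) Finset.univ := by
        intro hmem
        obtain ⟨z, -, hz⟩ := Finset.mem_image.mp hmem
        exact Fin.succAbove_ne r z (hsm.injective hz)
      have h1 : (fun a => (insert (f r) (Finset.image (f ∘ r.succAbove) Finset.univ)).orderEmbOfFin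
          (jcard (f ∘ r.succAbove, f r) (hsm.comp (Fin.strictMono_succAbove r)) hnotmem) a) = f :=
        (Finset.orderEmbOfFin_unique _ hmemf hsm).symm
      have h2 : (Finset.univ.filter fun j => (f ∘ r.succAbove) j < f r).card = (r : ℕ) :=
        pos_of_strictMono hsm r
      exact Prod.ext h1 (Fin.ext h2)
    · -- right inverse
      rintro ⟨g, i⟩ hq
      obtain ⟨-, hg, hi⟩ := Finset.mem_filter.mp hq
      obtain ⟨hb, hc⟩ := insert_orderEmb_facts hg hi (jcard (g, i) hg hi) (jpos (g, i))
      refine Prod.ext ?_ ?_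
      · funext x
        exact congrFun hc x
      · exact hb
    · -- values match
      rintro ⟨f, r⟩ hp
      have hsm : StrictMono f := (Finset.mem_filter.mp hp).2
      rw [hterm, hG]
      simp only []
      rw [if_pos hsm]
      have hpos_eq : (Finset.univ.filter fun j => (f ∘ r.succAbove) j < f r).card = (r : ℕ) :=
        pos_of_strictMono hsm r
      have hSig : (∑ j : Fin (k' + 1), ((f j : ℕ)))
          = (f r : ℕ) + ∑ j : Fin k', (((f ∘ r.succAbove) j : ℕ)) :=
        Fin.sum_univ_succAbove (fun j => ((f j : ℕ))) r
      have hEps : (∑ j : Fin (k' + 1), ((f j : ℕ) - (j : ℕ))) + (∑ j : Fin (k' + 1), (j : ℕ))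
          = ∑ j : Fin (k' + 1), (f j : ℕ) := by
        rw [← Finset.sum_add_distrib]
        exact Finset.sum_congr rfl fun j _ => Nat.sub_add_cancel (le_of_strictMono hsm j)
      rw [hpos_eq]
      have hexp : (∑ j : Fin (k' + 1), (j : ℕ)) + (∑ j : Fin k', (((f ∘ r.succAbove) j : ℕ)))
          + ((f r : ℕ) + (r : ℕ) + (j₀ : ℕ))
          = ((∑ j : Fin (k' + 1), ((f j : ℕ) - (j : ℕ))) + ((r : ℕ) + (j₀ : ℕ)))
            + 2 * (∑ j : Fin (k' + 1), (j : ℕ)) := by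
        omega
      rw [hexp, pow_add, pow_add, pow_mul, neg_one_sq, one_pow, mul_one]
      ring
  -- Step 4 : the reindexed sum vanishes
  have step4 : ∑ q ∈ Finset.univ.filter
      (fun q : (Fin k' → Fin n) × Fin n =>
        StrictMono q.1 ∧ q.2 ∉ Finset.image q.1 Finset.univ), G q = 0 := by
    rw [Finset.sum_filter, Fintype.sum_prod_type]
    refine Finset.sum_eq_zero fun g _ => ?_
    by_cases hg : StrictMono g
    · have hsum : ∑ i : Fin n,
          (if StrictMono g ∧ i ∉ Finset.image g Finset.univ then G (g, i) else 0)
          = ∑ i ∈ Finset.univ.filter (fun x : Fin n => x ∉ Finset.image g Finset.univ),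
              G (g, i) := by
        rw [Finset.sum_filter]
        exact Finset.sum_congr rfl fun i _ => by simp [hg]
      rw [hsum]
      set compl := Finset.univ.filter (fun x : Fin n => x ∉ Finset.image g Finset.univ)
        with hcompl
      have hcards := Finset.card_filter_add_card_filter_not
        (s := (Finset.univ : Finset (Fin n))) (p := fun x => x ∈ Finset.image g Finset.univ)
      have hfiltermem : Finset.univ.filter (fun x : Fin n => x ∈ Finset.image g Finset.univ)
          = Finset.image g Finset.univ := by
        rw [Finset.filter_mem_eq_inter, Finset.univ_inter]
      have himgcard : (Finset.image g Finset.univ).card = k' := by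
        rw [Finset.card_image_of_injective _ hg.injective, card_univ, Fintype.card_fin]
      have hNcard : compl.card + k' = n := by
        rw [hfiltermem, himgcard, card_univ, Fintype.card_fin] at hcards
        rw [hcompl]
        omega
      have hNeven : Even compl.card := by
        rw [Nat.even_iff]
        have h2 := Nat.odd_iff.mp hodd
        omega
      have himg : Finset.image (fun z => compl.orderEmbOfFin rfl z) Finset.univ = compl :=
        image_orderEmbOfFin' compl rfl
      rw [← himg, Finset.sum_image (fun a _ b _ h => (compl.orderEmbOfFin rfl).injective h)]
      have hterm_j : ∀ j : Fin compl.card, G (g, compl.orderEmbOfFin rfl j)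
          = ((-1 : F) ^ ((∑ j : Fin (k' + 1), (j : ℕ)) + (∑ x, (g x : ℕ)) + (j₀ : ℕ))
              * (c * D g)) * (-1 : F) ^ (j : ℕ) := by
        intro j
        have h1 : ((compl.orderEmbOfFin rfl j : Fin n) : ℕ)
            = (Finset.univ.filter fun x => g x < compl.orderEmbOfFin rfl j).card
              + (compl.filter fun x => x < compl.orderEmbOfFin rfl j).card :=
          count_split hg (compl.orderEmbOfFin rfl j)
        have h2 : (compl.filter fun x => x < compl.orderEmbOfFin rfl j).card = (j : ℕ) :=
          rank_orderEmbOfFin compl rfl j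
        rw [hG]
        simp only []
        have hexp2 : (∑ j : Fin (k' + 1), (j : ℕ)) + (∑ x, (g x : ℕ))
            + (((compl.orderEmbOfFin rfl j : Fin n) : ℕ)
              + (Finset.univ.filter fun x => g x < compl.orderEmbOfFin rfl j).card + (j₀ : ℕ))
            = (((∑ j : Fin (k' + 1), (j : ℕ)) + (∑ x, (g x : ℕ)) + (j₀ : ℕ)) + (j : ℕ))
              + 2 * (Finset.univ.filter fun x => g x < compl.orderEmbOfFin rfl j).card := by
          omega
        rw [hexp2, pow_add, pow_add, pow_mul, neg_one_sq, one_pow, mul_one]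
        ring
      rw [Finset.sum_congr rfl fun j _ => hterm_j j, ← Finset.mul_sum,
        sum_fin_neg_one_pow hNeven, mul_zero]
    · refine Finset.sum_eq_zero fun i _ => ?_
      rw [if_neg]
      exact fun hcontra => hg hcontra.1
  rw [step1, step2, step3, step4]
open Classical in
private lemma cullisDet_updateCol_add {F : Type*} [Field F] {n k : ℕ}
    (X : Matrix (Fin n) (Fin k) F) (a : Fin k) (u v : Fin n → F) :
    cullisDet (X.updateCol a (fun i => u i + v i))
      = cullisDet (X.updateCol a u) + cullisDet (X.updateCol a v) := by
  unfold cullisDet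
  rw [← Finset.sum_add_distrib]
  refine Finset.sum_congr rfl fun f _ => ?_
  by_cases hf : StrictMono f
  · rw [if_pos hf, if_pos hf, if_pos hf]
    have hsub : ∀ w : Fin n → F, (X.updateCol a w).submatrix f id
        = (X.submatrix f id).updateCol a (w ∘ f) := by
      intro w; ext i' j'
      simp [Matrix.updateCol_apply, Matrix.submatrix_apply]
    rw [hsub, hsub, hsub]
    have h : ((fun i => u i + v i) ∘ f) = (u ∘ f) + (v ∘ f) := rfl
    rw [h, Matrix.det_updateCol_add, mul_add]
  · rw [if_neg hf, if_neg hf, if_neg hf]; ring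

/-- Corollary 2.17: adding a linear map with values in `W_{n,k}` preserves the
Cullis determinant when `n + k` is odd. -/
theorem stmt1 {F : Type*} [Field F] {n k : ℕ} (hk : 1 ≤ k) (hkn : k < n)
    (hodd : Odd (n + k))
    (φ : Matrix (Fin n) (Fin k) F →ₗ[F] Matrix (Fin n) (Fin k) F)
    (hφ : ∀ X (i i' : Fin n), φ X i = φ X i')
    (X : Matrix (Fin n) (Fin k) F) :
    cullisDet (X + φ X) = cullisDet X := by
  classical
  have hn : 0 < n := by omega
  set c : Fin k → F := fun j => φ X ⟨0, hn⟩ j with hc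
  have hφc : ∀ i j, φ X i j = c j := fun i j => by
    rw [hc]; exact congrFun (hφ X i ⟨0, hn⟩) j
  have key : ∀ s : Finset (Fin k),
      cullisDet (fun i j => X i j + if j ∈ s then c j else 0) = cullisDet X := by
    intro s
    induction s using Finset.induction with
    | empty => congr 1; ext i j; simp
    | @insert a s ha ih =>
      have hM : (fun i j => X i j + if j ∈ insert a s then c j else 0)
          = (Matrix.updateCol (fun i j => X i j + if j ∈ s then c j else 0) a
              (fun i => X i a + c a)) := by
        ext i j
        by_cases hj : j = a
        · subst hj; simp [Matrix.updateCol, Function.update_apply, ha]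
        · simp [Matrix.updateCol, Function.update_apply, hj, Finset.mem_insert]
      rw [hM]
      have hsplit : (fun i => X i a + c a)
          = fun i => (fun i' => X i' a) i + (fun _ => c a) i := rfl
      rw [hsplit]
      erw [cullisDet_updateCol_add]
      have h1 : (Matrix.updateCol (fun i j => X i j + if j ∈ s then c j else 0) a
          (fun i' => X i' a)) = (fun i j => X i j + if j ∈ s then c j else 0) := by
        ext i j
        by_cases hj : j = a
        · subst hj; simp [Matrix.updateCol, Function.update_apply, ha]
        · simp [Matrix.updateCol, Function.update_apply, hj]
      have h2 : cullisDet (Matrix.updateCol (fun i j => X i j + if j ∈ s then c j else 0) a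
          (fun _ => c a)) = 0 := by
        apply cullisDet_eq_zero_of_const_col hk hkn hodd _ a (c a)
        intro i; simp [Matrix.updateCol, Function.update_apply]
      rw [h1, h2, ih, add_zero]
  have hfinal : (X + φ X) = fun i j => X i j + if j ∈ (Finset.univ : Finset (Fin k)) then c j
      else 0 := by
    ext i j; simp [Matrix.add_apply, hφc]
  rw [hfinal, key Finset.univ]
end

section
/- Let F be a field, let n ≥ k ≥ 2 with n + k odd, and let x_1, ..., x_n ∈ F. Let X be the n×k matrix over F whose first column is (x_1, ..., x_n)^t, whose j-th column for 2 ≤ j ≤ k−1 is the standard basis column vector with a single 1 in row j+1, and whose k-th column has entry 1 in rows 3 through n and 0 in rows 1 and 2. Then det_{n,k}(X) = (−1)^{k−1}(x_1 − x_2). -/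
section Helpers
variable {F : Type*} [Field F]




lemma detD1 {k : ℕ} (hk : 2 ≤ k) (M : Matrix (Fin k) (Fin k) F) (v w : Fin k → F)
    (h0 : ∀ p, M p ⟨0, by omega⟩ = v p)
    (hl : ∀ p, M p ⟨k - 1, by omega⟩ = w p)
    (hm : ∀ p j : Fin k, (j : ℕ) ≠ 0 → (j : ℕ) ≠ k - 1 →
      M p j = if (p : ℕ) = (j : ℕ) then 1 else 0) :
    M.det = v ⟨0, by omega⟩ * w ⟨k - 1, by omega⟩ - v ⟨k - 1, by omega⟩ * w ⟨0, by omega⟩ := by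
  set i0 : Fin k := ⟨0, by omega⟩ with hi0
  set i1 : Fin k := ⟨k - 1, by omega⟩ with hi1
  have hne : i0 ≠ i1 := by
    simp only [hi0, hi1, Fin.ne_iff_vne]; omega
  rw [Matrix.det_apply]
  rw [Fintype.sum_eq_add (1 : Equiv.Perm (Fin k)) (Equiv.swap i0 i1) ?hne ?hz]
  case hne =>
    intro h
    have : (1 : Equiv.Perm (Fin k)) i0 = Equiv.swap i0 i1 i0 := by rw [h]
    simp [Equiv.swap_apply_left] at this
    exact hne this
  case hz =>
    intro σ ⟨hσ1, hσ2⟩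
    suffices h : ∏ i, M (σ i) i = 0 by rw [h, smul_zero]
    by_contra hne0
    have hfac : ∀ i : Fin k, M (σ i) i ≠ 0 := by
      intro i
      exact Finset.prod_ne_zero_iff.mp hne0 i (Finset.mem_univ i)
    have hfix : ∀ j : Fin k, (j : ℕ) ≠ 0 → (j : ℕ) ≠ k - 1 → σ j = j := by
      intro j hj1 hj2
      have := hfac j
      rw [hm _ _ hj1 hj2] at this
      split at this
      · exact Fin.ext (by assumption)
      · exact absurd rfl this
    have hmem : ∀ i : Fin k, i = i0 ∨ i = i1 → σ i = i0 ∨ σ i = i1 := by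
      intro i _
      by_cases h1 : (σ i : ℕ) = 0
      · left; exact Fin.ext h1
      by_cases h2 : (σ i : ℕ) = k - 1
      · right; exact Fin.ext h2
      · exfalso
        have hss := hfix (σ i) h1 h2
        have hii : σ i = i := σ.injective hss
        rcases ‹i = i0 ∨ i = i1› with h | h <;> subst h
        · exact h1 (by rw [hii])
        · exact h2 (by rw [hii])
    rcases hmem i0 (Or.inl rfl) with h00 | h01
    · have h11 : σ i1 = i1 := by
        rcases hmem i1 (Or.inr rfl) with h | h
        · exact absurd (σ.injective (h00.trans h.symm)) hne
        · exact h
      apply hσ1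
      ext j
      by_cases hj1 : (j : ℕ) = 0
      · have : j = i0 := Fin.ext hj1
        rw [this, h00]; rfl
      by_cases hj2 : (j : ℕ) = k - 1
      · have : j = i1 := Fin.ext hj2
        rw [this, h11]; rfl
      · rw [hfix j hj1 hj2]; rfl
    · have h10 : σ i1 = i0 := by
        rcases hmem i1 (Or.inr rfl) with h | h
        · exact h
        · exact absurd (σ.injective (h01.trans h.symm)) hne
      apply hσ2
      ext j
      by_cases hj1 : (j : ℕ) = 0
      · have : j = i0 := Fin.ext hj1
        rw [this, h01, Equiv.swap_apply_left]
      by_cases hj2 : (j : ℕ) = k - 1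
      · have : j = i1 := Fin.ext hj2
        rw [this, h10, Equiv.swap_apply_right]
      · rw [hfix j hj1 hj2, Equiv.swap_apply_of_ne_of_ne
            (fun h => hj1 (congrArg Fin.val h)) (fun h => hj2 (congrArg Fin.val h))]
  · have hp1 : ∏ i, M ((1 : Equiv.Perm (Fin k)) i) i = v i0 * w i1 := by
      rw [Fintype.prod_eq_mul i0 i1 hne]
      · simp only [Equiv.Perm.one_apply]
        rw [show M i0 i0 = v i0 from h0 i0, show M i1 i1 = w i1 from hl i1]
      · intro j ⟨hj1, hj2⟩
        have hj1' : (j : ℕ) ≠ 0 := fun h => hj1 (Fin.ext h)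
        have hj2' : (j : ℕ) ≠ k - 1 := fun h => hj2 (Fin.ext h)
        simp only [Equiv.Perm.one_apply]
        rw [hm j j hj1' hj2', if_pos rfl]
    have hp2 : ∏ i, M (Equiv.swap i0 i1 i) i = v i1 * w i0 := by
      rw [Fintype.prod_eq_mul i0 i1 hne]
      · rw [Equiv.swap_apply_left, Equiv.swap_apply_right,
          show M i1 i0 = v i1 from h0 i1, show M i0 i1 = w i0 from hl i0]
      · intro j ⟨hj1, hj2⟩
        have hj1' : (j : ℕ) ≠ 0 := fun h => hj1 (Fin.ext h)
        have hj2' : (j : ℕ) ≠ k - 1 := fun h => hj2 (Fin.ext h)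
        rw [Equiv.swap_apply_of_ne_of_ne hj1 hj2, hm j j hj1' hj2', if_pos rfl]
    rw [hp1, hp2, Equiv.Perm.sign_one, Equiv.Perm.sign_swap hne]
    simp [sub_eq_add_neg]

-- value of the inverse rotation
lemma rotInv_val {m : ℕ} (p : Fin (m + 2)) :
    (((finRotate (m + 2))⁻¹ p : Fin (m + 2)) : ℕ) = if (p : ℕ) = 0 then m + 1 else (p : ℕ) - 1 := by
  have h : (finRotate (m + 2))⁻¹ p =
      ⟨if (p : ℕ) = 0 then m + 1 else (p : ℕ) - 1, by split <;> omega⟩ := by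
    rw [Equiv.Perm.inv_def, Equiv.symm_apply_eq, finRotate_succ_apply]
    ext
    rw [Fin.val_add]
    simp only [Fin.val_one]
    split
    · rename_i hp; rw [hp, show m + 1 + 1 = m + 2 by omega, Nat.mod_self]
    · have := p.isLt
      rw [Nat.mod_eq_of_lt (by omega)]
      omega
  rw [h]

lemma detD0 {k : ℕ} (hk : 2 ≤ k) (M : Matrix (Fin k) (Fin k) F) (v w : Fin k → F)
    (h0 : ∀ p, M p ⟨0, by omega⟩ = v p)
    (hl : ∀ p, M p ⟨k - 1, by omega⟩ = w p)
    (hm : ∀ p j : Fin k, (j : ℕ) ≠ 0 → (j : ℕ) ≠ k - 1 →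
      M p j = if (p : ℕ) = (j : ℕ) + 1 then 1 else 0)
    (hw : ∀ p : Fin k, (p : ℕ) < 2 → w p = 0) :
    M.det = 0 := by
  rw [Matrix.det_apply]
  apply Finset.sum_eq_zero
  intro σ _
  suffices h : ∏ i, M (σ i) i = 0 by rw [h, smul_zero]
  set i1 : Fin k := ⟨k - 1, by omega⟩ with hi1
  by_cases hall : ∀ j : Fin k, (j : ℕ) ≠ 0 → (j : ℕ) ≠ k - 1 → (σ j : ℕ) = (j : ℕ) + 1
  · apply Finset.prod_eq_zero (Finset.mem_univ i1)
    rw [hl]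
    apply hw
    by_contra hge
    push_neg at hge
    have hlt : (σ i1 : ℕ) < k := (σ i1).isLt
    have hne1 : (σ i1 : ℕ) - 1 ≠ 0 := by omega
    have hne2 : (σ i1 : ℕ) - 1 ≠ k - 1 := by
      intro h
      omega
    set j : Fin k := ⟨(σ i1 : ℕ) - 1, by omega⟩ with hj
    have := hall j hne1 hne2
    have hj2 : σ j = σ i1 := Fin.ext (by rw [this]; simp [hj]; omega)
    have : j = i1 := σ.injective hj2
    have : (j : ℕ) = k - 1 := congrArg Fin.val this
    simp [hj] at this
    omega
  · push_neg at hall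
    obtain ⟨j, hj1, hj2, hj3⟩ := hall
    apply Finset.prod_eq_zero (Finset.mem_univ j)
    rw [hm _ _ hj1 hj2, if_neg hj3]

lemma detD2 {k : ℕ} (hk : 2 ≤ k) (M : Matrix (Fin k) (Fin k) F) (v w : Fin k → F)
    (h0 : ∀ p, M p ⟨0, by omega⟩ = v p)
    (hl : ∀ p, M p ⟨k - 1, by omega⟩ = w p)
    (hm : ∀ p j : Fin k, (j : ℕ) ≠ 0 → (j : ℕ) ≠ k - 1 →
      M p j = if (p : ℕ) + 1 = (j : ℕ) then 1 else 0) :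
    M.det = (-1 : F) ^ (k - 1) *
      (v ⟨k - 1, by omega⟩ * w ⟨k - 2, by omega⟩ - v ⟨k - 2, by omega⟩ * w ⟨k - 1, by omega⟩) := by
  obtain ⟨m, rfl⟩ : ∃ m, k = m + 2 := ⟨k - 2, by omega⟩
  have hρ0 : (finRotate (m + 2))⁻¹ ⟨0, by omega⟩ = (⟨m + 1, by omega⟩ : Fin (m + 2)) := by
    ext; rw [rotInv_val]; simp
  have hρ1 : (finRotate (m + 2))⁻¹ ⟨m + 2 - 1, by omega⟩ = (⟨m, by omega⟩ : Fin (m + 2)) := by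
    ext; rw [rotInv_val]; simp
  have hmid : ∀ p j : Fin (m + 2), (j : ℕ) ≠ 0 → (j : ℕ) ≠ m + 2 - 1 →
      ((M.submatrix (⇑(finRotate (m + 2))⁻¹) id) p j) = if (p : ℕ) = (j : ℕ) then 1 else 0 := by
    intro p j hj1 hj2
    have hval := rotInv_val p
    rw [Matrix.submatrix_apply, id, hm _ _ hj1 hj2]
    have hjlt := j.isLt
    by_cases hp : (p : ℕ) = 0
    · rw [if_pos hp] at hval
      rw [if_neg (by omega), if_neg (by omega)]
    · rw [if_neg hp] at hval
      have hple := p.isLt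
      by_cases hpj : (p : ℕ) = (j : ℕ)
      · rw [if_pos hpj, if_pos (by omega)]
      · rw [if_neg hpj, if_neg (by omega)]
  have hN := detD1 (F := F) (k := m + 2) (by omega) (M.submatrix (⇑(finRotate (m + 2))⁻¹) id)
      (fun p => v ((finRotate (m + 2))⁻¹ p)) (fun p => w ((finRotate (m + 2))⁻¹ p))
      (fun p => h0 _) (fun p => hl _) hmid
  simp only [hρ0, hρ1] at hN
  have hdet := Matrix.det_permute ((finRotate (m + 2))⁻¹) M
  have hsign : Equiv.Perm.sign ((finRotate (m + 2))⁻¹) = (-1 : ℤˣ) ^ (m + 1) := by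
    rw [Equiv.Perm.sign_inv, sign_finRotate]
    rfl
  have hcast : (((Equiv.Perm.sign ((finRotate (m + 2))⁻¹)) : ℤ) : F) = (-1 : F) ^ (m + 1) := by
    rw [hsign]; push_cast; ring
  have hpow : (-1 : F) ^ (m + 1) * (((Equiv.Perm.sign ((finRotate (m + 2))⁻¹)) : ℤ) : F) = 1 := by
    rw [hcast, ← pow_add]
    exact Even.neg_one_pow ⟨m + 1, by ring⟩
  have key : M.det = (-1 : F) ^ (m + 1) *
      (M.submatrix (⇑(finRotate (m + 2))⁻¹) id).det := by
    rw [hdet, ← mul_assoc, hpow, one_mul]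
  rw [key, hN]
  norm_num




lemma sum_two_rest {k : ℕ} (hk : 2 ≤ k) (u : Fin k → ℕ) (i₀ i₁ : Fin k) (c : ℕ)
    (hne : i₀ ≠ i₁) (hmid : ∀ j : Fin k, j ≠ i₀ → j ≠ i₁ → u j = c) :
    ∑ j, u j = u i₀ + u i₁ + (k - 2) * c := by
  classical
  rw [← Finset.add_sum_erase _ u (Finset.mem_univ i₀)]
  rw [← Finset.add_sum_erase _ u (Finset.mem_erase.mpr ⟨hne.symm, Finset.mem_univ i₁⟩)]
  have hrest : ∑ j ∈ (Finset.univ.erase i₀).erase i₁, u j = (k - 2) * c := by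
    have h1 : ∑ j ∈ (Finset.univ.erase i₀).erase i₁, u j =
        ∑ _j ∈ (Finset.univ.erase i₀).erase i₁, c :=
      Finset.sum_congr rfl (fun j hj => by
        rw [Finset.mem_erase, Finset.mem_erase] at hj
        exact hmid j hj.2.1 hj.1)
    rw [h1, Finset.sum_const, smul_eq_mul]
    congr 1
    rw [Finset.card_erase_of_mem (Finset.mem_erase.mpr ⟨hne.symm, Finset.mem_univ i₁⟩),
      Finset.card_erase_of_mem (Finset.mem_univ i₀)]
    simp
    omega
  rw [hrest]; ring

lemma alt_sum (m : ℕ) : ∑ i ∈ Finset.range m, (-1 : F) ^ i = if Even m then 0 else 1 := by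
  induction m with
  | zero => simp
  | succ m ih =>
    rw [Finset.sum_range_succ, ih]
    have he : Even (m + 1) ↔ ¬ Even m := Nat.even_add_one
    rcases Nat.even_or_odd m with h | h
    · rw [if_pos h, if_neg (by rw [he]; exact not_not_intro h), Even.neg_one_pow h]; ring
    · have h' : ¬ Even m := Nat.not_even_iff_odd.mpr h
      rw [if_neg h', if_pos (he.mpr h'), Odd.neg_one_pow h]; ring

-- strict mono gap
lemma mono_gap {n k : ℕ} {f : Fin k → Fin n} (hf : StrictMono f) (d : ℕ) :
    ∀ i j : Fin k, (i : ℕ) + d = (j : ℕ) → (f i : ℕ) + d ≤ (f j : ℕ) := by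
  induction d with
  | zero =>
    intro i j h
    have : i = j := Fin.ext (by omega)
    subst this; omega
  | succ d ih =>
    intro i j h
    have hd : (i : ℕ) + d < k := by have := j.isLt; omega
    have h1 := ih i ⟨(i : ℕ) + d, hd⟩ rfl
    have h2 : f ⟨(i : ℕ) + d, hd⟩ < f j := hf (by rw [Fin.lt_def]; simp; omega)
    rw [Fin.lt_def] at h2
    omega
private lemma fmlt {k : ℕ} {a b : ℕ} (ha : a < k) (hb : b < k) (h : a < b) :
    (⟨a, ha⟩ : Fin k) < ⟨b, hb⟩ := by rw [Fin.mk_lt_mk]; exact h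

private lemma fmle {k : ℕ} {a : ℕ} (ha : a < k) {i : Fin k} (h : a ≤ (i : ℕ)) :
    (⟨a, ha⟩ : Fin k) ≤ i := by rw [Fin.le_def]; exact h

lemma classify {n k : ℕ} (hk : 2 ≤ k) (hkn : k ≤ n) (f : Fin k → Fin n) (hf : StrictMono f)
    (hcov : ∀ m : ℕ, 2 ≤ m → m ≤ k - 1 → ∃ i, (f i : ℕ) = m) :
    (∀ j : Fin k, (f j : ℕ) = (j : ℕ)) ∨
    ((f ⟨0, by omega⟩ : ℕ) < 2 ∧ k ≤ (f ⟨k - 1, by omega⟩ : ℕ) ∧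
      ∀ j : Fin k, (j : ℕ) ≠ 0 → (j : ℕ) ≠ k - 1 → (f j : ℕ) = (j : ℕ) + 1) ∨
    (k ≤ (f ⟨k - 2, by omega⟩ : ℕ) ∧
      ∀ j : Fin k, (j : ℕ) ≠ k - 2 → (j : ℕ) ≠ k - 1 → (f j : ℕ) = (j : ℕ) + 2) := by
  by_cases hA : 2 ≤ (f ⟨0, by omega⟩ : ℕ)
  · right; right
    have main : ∀ d (hd : d + 3 ≤ k), (f ⟨d, by omega⟩ : ℕ) = d + 2 := by
      intro d
      induction d with
      | zero =>
        intro hd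
        obtain ⟨i, hi⟩ := hcov 2 le_rfl (by omega)
        have hle : (f ⟨0, by omega⟩ : ℕ) ≤ (f i : ℕ) :=
          Fin.le_def.mp (hf.monotone (fmle (by omega) (by omega)))
        omega
      | succ d ih =>
        intro hd
        have h1 := ih (by omega)
        obtain ⟨i, hi⟩ := hcov (d + 3) (by omega) (by omega)
        have hflt : f ⟨d, by omega⟩ < f i := by rw [Fin.lt_def]; omega
        have hgt : d < (i : ℕ) := Fin.lt_def.mp (hf.lt_iff_lt.mp hflt)
        have h2 : (f ⟨d + 1, by omega⟩ : ℕ) ≤ (f i : ℕ) :=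
          Fin.le_def.mp (hf.monotone (fmle (by omega) (by omega)))
        have h3 : (f ⟨d, by omega⟩ : ℕ) < (f ⟨d + 1, by omega⟩ : ℕ) :=
          Fin.lt_def.mp (hf (fmlt (by omega) (by omega) (by omega)))
        omega
    constructor
    · rcases Nat.lt_or_ge k 3 with h3 | h3
      · have hk2 : k - 2 = 0 := by omega
        rw [show (⟨k - 2, by omega⟩ : Fin k) = ⟨0, by omega⟩ from Fin.ext hk2]
        omega
      · have h1 := main (k - 3) (by omega)
        have h2 : (f ⟨k - 3, by omega⟩ : ℕ) < (f ⟨k - 2, by omega⟩ : ℕ) :=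
          Fin.lt_def.mp (hf (fmlt (by omega) (by omega) (by omega)))
        omega
    · intro j hj1 hj2
      have hjk := j.isLt
      have h := main (j : ℕ) (by omega)
      rwa [show (⟨(j : ℕ), by omega⟩ : Fin k) = j from Fin.ext rfl] at h
  · push_neg at hA
    by_cases hB : 2 ≤ (f ⟨1, by omega⟩ : ℕ)
    · right; left
      have main : ∀ d (hd : d + 3 ≤ k), (f ⟨d + 1, by omega⟩ : ℕ) = d + 2 := by
        intro d
        induction d with
        | zero =>
          intro hd
          show (f ⟨1, by omega⟩ : ℕ) = 2
          obtain ⟨i, hi⟩ := hcov 2 le_rfl (by omega)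
          have hflt : f ⟨0, by omega⟩ < f i := by rw [Fin.lt_def]; omega
          have hgt : 0 < (i : ℕ) := Fin.lt_def.mp (hf.lt_iff_lt.mp hflt)
          have h2 : (f ⟨1, by omega⟩ : ℕ) ≤ (f i : ℕ) :=
            Fin.le_def.mp (hf.monotone (fmle (by omega) (by omega)))
          omega
        | succ d ih =>
          intro hd
          show (f ⟨d + 2, by omega⟩ : ℕ) = d + 3
          have h1 := ih (by omega)
          obtain ⟨i, hi⟩ := hcov (d + 3) (by omega) (by omega)
          have hflt : f ⟨d + 1, by omega⟩ < f i := by rw [Fin.lt_def]; omega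
          have hgt : d + 1 < (i : ℕ) := Fin.lt_def.mp (hf.lt_iff_lt.mp hflt)
          have h2 : (f ⟨d + 2, by omega⟩ : ℕ) ≤ (f i : ℕ) :=
            Fin.le_def.mp (hf.monotone (fmle (by omega) (by omega)))
          have h3 : (f ⟨d + 1, by omega⟩ : ℕ) < (f ⟨d + 2, by omega⟩ : ℕ) :=
            Fin.lt_def.mp (hf (fmlt (by omega) (by omega) (by omega)))
          omega
      refine ⟨hA, ?_, ?_⟩
      · rcases Nat.lt_or_ge k 3 with h3 | h3
        · have hk2 : k - 1 = 1 := by omega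
          rw [show (⟨k - 1, by omega⟩ : Fin k) = ⟨1, by omega⟩ from Fin.ext hk2]
          omega
        · have h1 := main (k - 3) (by omega)
          have h2 : (f ⟨k - 3 + 1, by omega⟩ : ℕ) < (f ⟨k - 1, by omega⟩ : ℕ) :=
            Fin.lt_def.mp (hf (fmlt (by omega) (by omega) (by omega)))
          omega
      · intro j hj1 hj2
        have hjk := j.isLt
        have h := main ((j : ℕ) - 1) (by omega)
        rw [show (⟨(j : ℕ) - 1 + 1, by omega⟩ : Fin k) = j from Fin.ext (by simp; omega)] at h
        omega
    · push_neg at hB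
      left
      have h01 : (f ⟨0, by omega⟩ : ℕ) < (f ⟨1, by omega⟩ : ℕ) :=
        Fin.lt_def.mp (hf (fmlt (by omega) (by omega) (by omega)))
      have main : ∀ d (hd : d < k), (f ⟨d, hd⟩ : ℕ) = d := by
        intro d
        induction d with
        | zero =>
          intro hd
          show (f ⟨0, by omega⟩ : ℕ) = 0
          omega
        | succ d ih =>
          intro hd
          by_cases hd0 : d = 0
          · subst hd0
            show (f ⟨1, by omega⟩ : ℕ) = 1
            omega
          · show (f ⟨d + 1, by omega⟩ : ℕ) = d + 1
            have h1 := ih (by omega)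
            obtain ⟨i, hi⟩ := hcov (d + 1) (by omega) (by omega)
            have hflt : f ⟨d, by omega⟩ < f i := by rw [Fin.lt_def]; omega
            have hgt : d < (i : ℕ) := Fin.lt_def.mp (hf.lt_iff_lt.mp hflt)
            have h2 : (f ⟨d + 1, by omega⟩ : ℕ) ≤ (f i : ℕ) :=
              Fin.le_def.mp (hf.monotone (fmle (by omega) (by omega)))
            have h3 : (f ⟨d, by omega⟩ : ℕ) < (f ⟨d + 1, by omega⟩ : ℕ) :=
              Fin.lt_def.mp (hf (fmlt (by omega) (by omega) (by omega)))
            omega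
      intro j
      have h := main (j : ℕ) j.isLt
      rwa [show (⟨(j : ℕ), j.isLt⟩ : Fin k) = j from Fin.ext rfl] at h




def XM (n k : ℕ) (x : Fin n → F) : Matrix (Fin n) (Fin k) F := fun i j =>
  if (j : ℕ) = 0 then x i
  else if (j : ℕ) = k - 1 then (if 2 ≤ (i : ℕ) then (1 : F) else 0)
  else if (i : ℕ) = (j : ℕ) + 1 then 1 else 0

lemma XM_e {n k : ℕ} (x : Fin n → F) (i : Fin n) (j : Fin k) :
    XM n k x i j = if (j : ℕ) = 0 then x i
      else if (j : ℕ) = k - 1 then (if 2 ≤ (i : ℕ) then (1 : F) else 0)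
      else if (i : ℕ) = (j : ℕ) + 1 then 1 else 0 := rfl

def ff0 {n k : ℕ} (hkn : k ≤ n) : Fin k → Fin n :=
  fun j => ⟨(j : ℕ), lt_of_lt_of_le j.isLt hkn⟩

def ff1 {n k : ℕ} (hk : 2 ≤ k) (hkn : k ≤ n) (a b : Fin n) : Fin k → Fin n := fun j =>
  ⟨if (j : ℕ) = 0 then (a : ℕ) else if (j : ℕ) = k - 1 then (b : ℕ) else (j : ℕ) + 1, by
    have h1 := j.isLt; have h2 := a.isLt; have h3 := b.isLt
    split_ifs <;> omega⟩

def ff2 {n k : ℕ} (hk : 2 ≤ k) (hkn : k ≤ n) (a b : Fin n) : Fin k → Fin n := fun j =>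
  ⟨if (j : ℕ) = k - 2 then (a : ℕ) else if (j : ℕ) = k - 1 then (b : ℕ) else (j : ℕ) + 2, by
    have h1 := j.isLt; have h2 := a.isLt; have h3 := b.isLt
    split_ifs <;> omega⟩

lemma ff0_val {n k : ℕ} (hkn : k ≤ n) (j : Fin k) : ((ff0 hkn j : Fin n) : ℕ) = (j : ℕ) := rfl

lemma ff1_val {n k : ℕ} (hk : 2 ≤ k) (hkn : k ≤ n) (a b : Fin n) (j : Fin k) :
    ((ff1 hk hkn a b j : Fin n) : ℕ) =
      if (j : ℕ) = 0 then (a : ℕ) else if (j : ℕ) = k - 1 then (b : ℕ) else (j : ℕ) + 1 := rfl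

lemma ff2_val {n k : ℕ} (hk : 2 ≤ k) (hkn : k ≤ n) (a b : Fin n) (j : Fin k) :
    ((ff2 hk hkn a b j : Fin n) : ℕ) =
      if (j : ℕ) = k - 2 then (a : ℕ) else if (j : ℕ) = k - 1 then (b : ℕ) else (j : ℕ) + 2 := rfl

lemma ff0_mono {n k : ℕ} (hkn : k ≤ n) : StrictMono (ff0 hkn) := by
  intro i j hij
  rw [Fin.lt_def] at hij ⊢
  exact hij

lemma ff1_mono {n k : ℕ} (hk : 2 ≤ k) (hkn : k ≤ n) {a b : Fin n}
    (ha : (a : ℕ) < 2) (hb : k ≤ (b : ℕ)) : StrictMono (ff1 hk hkn a b) := by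
  intro i j hij
  rw [Fin.lt_def] at hij ⊢
  rw [ff1_val, ff1_val]
  have h1 := i.isLt; have h2 := j.isLt
  split_ifs <;> omega

lemma ff2_mono {n k : ℕ} (hk : 2 ≤ k) (hkn : k ≤ n) {a b : Fin n}
    (ha : k ≤ (a : ℕ)) (hab : (a : ℕ) < (b : ℕ)) : StrictMono (ff2 hk hkn a b) := by
  intro i j hij
  rw [Fin.lt_def] at hij ⊢
  rw [ff2_val, ff2_val]
  have h1 := i.isLt; have h2 := j.isLt
  split_ifs <;> omega

end Helpers
section Evals
variable {F : Type*} [Field F]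

lemma det0x {n k : ℕ} (hk : 2 ≤ k) (hkn : k ≤ n) (x : Fin n → F) :
    ((XM n k x).submatrix (ff0 hkn) id).det = 0 := by
  apply detD0 hk _ (fun p => x (ff0 hkn p))
    (fun p => if 2 ≤ ((ff0 hkn p : Fin n) : ℕ) then (1 : F) else 0)
  · intro p
    rw [Matrix.submatrix_apply, id, XM_e, if_pos rfl]
  · intro p
    rw [Matrix.submatrix_apply, id, XM_e, if_neg (by simp; omega), if_pos (by simp)]
  · intro p j hj1 hj2
    rw [Matrix.submatrix_apply, id, XM_e, if_neg hj1, if_neg hj2, ff0_val]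
  · intro p hp
    rw [if_neg (by rw [ff0_val]; omega)]

lemma det1x {n k : ℕ} (hk : 2 ≤ k) (hkn : k ≤ n) (x : Fin n → F) {a b : Fin n}
    (ha : (a : ℕ) < 2) (hb : k ≤ (b : ℕ)) :
    ((XM n k x).submatrix (ff1 hk hkn a b) id).det = x a := by
  have e1 : ff1 hk hkn a b ⟨0, by omega⟩ = a := by
    apply Fin.ext
    show (if (0 : ℕ) = 0 then (a : ℕ) else if 0 = k - 1 then (b : ℕ) else 0 + 1) = (a : ℕ)
    rw [if_pos rfl]
  have e2 : ((ff1 hk hkn a b ⟨k - 1, by omega⟩ : Fin n) : ℕ) = (b : ℕ) := by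
    show (if k - 1 = 0 then (a : ℕ) else if k - 1 = k - 1 then (b : ℕ) else k - 1 + 1) = (b : ℕ)
    rw [if_neg (by omega), if_pos rfl]
  have w1 : (if 2 ≤ ((ff1 hk hkn a b ⟨k - 1, by omega⟩ : Fin n) : ℕ) then (1 : F) else 0) = 1 := by
    rw [e2, if_pos (by omega)]
  have w0 : (if 2 ≤ ((ff1 hk hkn a b ⟨0, by omega⟩ : Fin n) : ℕ) then (1 : F) else 0) = 0 := by
    rw [e1, if_neg (by omega)]
  have h := detD1 hk ((XM n k x).submatrix (ff1 hk hkn a b) id)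
    (fun p => x (ff1 hk hkn a b p))
    (fun p => if 2 ≤ ((ff1 hk hkn a b p : Fin n) : ℕ) then (1 : F) else 0)
    (fun p => by rw [Matrix.submatrix_apply, id, XM_e, if_pos rfl])
    (fun p => by rw [Matrix.submatrix_apply, id, XM_e, if_neg (by simp; omega), if_pos (by simp)])
    ?_
  · rw [h]
    rw [w1, w0, e1]
    ring
  · intro p j hj1 hj2
    rw [Matrix.submatrix_apply, id, XM_e, if_neg hj1, if_neg hj2, ff1_val]
    have h1 := p.isLt; have h2 := j.isLt
    split_ifs <;> first | rfl | omega

lemma det2x {n k : ℕ} (hk : 2 ≤ k) (hkn : k ≤ n) (x : Fin n → F) {a b : Fin n}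
    (ha : k ≤ (a : ℕ)) (hab : (a : ℕ) < (b : ℕ)) :
    ((XM n k x).submatrix (ff2 hk hkn a b) id).det = (-1 : F) ^ (k - 1) * (x b - x a) := by
  have e1 : ff2 hk hkn a b ⟨k - 1, by omega⟩ = b := by
    apply Fin.ext
    show (if k - 1 = k - 2 then (a : ℕ) else if k - 1 = k - 1 then (b : ℕ) else k - 1 + 2) = (b : ℕ)
    rw [if_neg (by omega), if_pos rfl]
  have e2 : ff2 hk hkn a b ⟨k - 2, by omega⟩ = a := by
    apply Fin.ext
    show (if k - 2 = k - 2 then (a : ℕ) else if k - 2 = k - 1 then (b : ℕ) else k - 2 + 2) = (a : ℕ)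
    rw [if_pos rfl]
  have w1 : (if 2 ≤ ((ff2 hk hkn a b ⟨k - 1, by omega⟩ : Fin n) : ℕ) then (1 : F) else 0) = 1 := by
    rw [e1, if_pos (by omega)]
  have w2 : (if 2 ≤ ((ff2 hk hkn a b ⟨k - 2, by omega⟩ : Fin n) : ℕ) then (1 : F) else 0) = 1 := by
    rw [e2, if_pos (by omega)]
  have h := detD2 hk ((XM n k x).submatrix (ff2 hk hkn a b) id)
    (fun p => x (ff2 hk hkn a b p))
    (fun p => if 2 ≤ ((ff2 hk hkn a b p : Fin n) : ℕ) then (1 : F) else 0)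
    (fun p => by rw [Matrix.submatrix_apply, id, XM_e, if_pos rfl])
    (fun p => by rw [Matrix.submatrix_apply, id, XM_e, if_neg (by simp; omega), if_pos (by simp)])
    ?_
  · rw [h]
    rw [w1, w2, e1, e2]
    ring
  · intro p j hj1 hj2
    rw [Matrix.submatrix_apply, id, XM_e, if_neg hj1, if_neg hj2, ff2_val]
    have h1 := p.isLt; have h2 := j.isLt
    split_ifs <;> first | rfl | omega

lemma wsum1 {n k : ℕ} (hk : 2 ≤ k) (hkn : k ≤ n) {a b : Fin n}
    (ha : (a : ℕ) < 2) (hb : k ≤ (b : ℕ)) :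
    ∑ j : Fin k, (((ff1 hk hkn a b j : Fin n) : ℕ) - (j : ℕ)) = (a : ℕ) + (b : ℕ) - 1 := by
  have v1 : ((ff1 hk hkn a b ⟨0, by omega⟩ : Fin n) : ℕ) = (a : ℕ) := by
    show (if (0 : ℕ) = 0 then (a : ℕ) else if 0 = k - 1 then (b : ℕ) else 0 + 1) = (a : ℕ)
    rw [if_pos rfl]
  have v2 : ((ff1 hk hkn a b ⟨k - 1, by omega⟩ : Fin n) : ℕ) = (b : ℕ) := by
    show (if k - 1 = 0 then (a : ℕ) else if k - 1 = k - 1 then (b : ℕ) else k - 1 + 1) = (b : ℕ)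
    rw [if_neg (by omega), if_pos rfl]
  have h := sum_two_rest hk (fun j => ((ff1 hk hkn a b j : Fin n) : ℕ) - (j : ℕ))
    ⟨0, by omega⟩ ⟨k - 1, by omega⟩ 1
    (by rw [Fin.ne_iff_vne]; simp; omega)
    (by
      intro j hj1 hj2
      have hv1 : (j : ℕ) ≠ 0 := fun h => hj1 (Fin.ext h)
      have hv2 : (j : ℕ) ≠ k - 1 := fun h => hj2 (Fin.ext h)
      show ((ff1 hk hkn a b j : Fin n) : ℕ) - (j : ℕ) = 1
      rw [ff1_val, if_neg hv1, if_neg hv2]; omega)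
  dsimp only at h
  rw [h, v1, v2]
  have hb' := b.isLt
  show (a : ℕ) - (0 : ℕ) + ((b : ℕ) - (k - 1)) + (k - 2) * 1 = (a : ℕ) + (b : ℕ) - 1
  omega

lemma wsum2 {n k : ℕ} (hk : 2 ≤ k) (hkn : k ≤ n) {a b : Fin n}
    (ha : k ≤ (a : ℕ)) (hab : (a : ℕ) < (b : ℕ)) :
    ∑ j : Fin k, (((ff2 hk hkn a b j : Fin n) : ℕ) - (j : ℕ)) = (a : ℕ) + (b : ℕ) - 1 := by
  have v1 : ((ff2 hk hkn a b ⟨k - 2, by omega⟩ : Fin n) : ℕ) = (a : ℕ) := by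
    show (if k - 2 = k - 2 then (a : ℕ) else if k - 2 = k - 1 then (b : ℕ) else k - 2 + 2) = (a : ℕ)
    rw [if_pos rfl]
  have v2 : ((ff2 hk hkn a b ⟨k - 1, by omega⟩ : Fin n) : ℕ) = (b : ℕ) := by
    show (if k - 1 = k - 2 then (a : ℕ) else if k - 1 = k - 1 then (b : ℕ) else k - 1 + 2) = (b : ℕ)
    rw [if_neg (by omega), if_pos rfl]
  have h := sum_two_rest hk (fun j => ((ff2 hk hkn a b j : Fin n) : ℕ) - (j : ℕ))
    ⟨k - 2, by omega⟩ ⟨k - 1, by omega⟩ 2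
    (by rw [Fin.ne_iff_vne]; simp; omega)
    (by
      intro j hj1 hj2
      have hv1 : (j : ℕ) ≠ k - 2 := fun h => hj1 (Fin.ext h)
      have hv2 : (j : ℕ) ≠ k - 1 := fun h => hj2 (Fin.ext h)
      show ((ff2 hk hkn a b j : Fin n) : ℕ) - (j : ℕ) = 2
      rw [ff2_val, if_neg hv1, if_neg hv2]; omega)
  dsimp only at h
  rw [h, v1, v2]
  show (a : ℕ) - (k - 2) + ((b : ℕ) - (k - 1)) + (k - 2) * 2 = (a : ℕ) + (b : ℕ) - 1
  omega

lemma wsum0 {n k : ℕ} (hkn : k ≤ n) :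
    ∑ j : Fin k, (((ff0 hkn j : Fin n) : ℕ) - (j : ℕ)) = 0 := by
  apply Finset.sum_eq_zero
  intro j _
  rw [ff0_val]
  omega

end Evals
section FinalSum
variable {F : Type*} [Field F]

lemma filter_ico (n p q : ℕ) (hqn : q ≤ n) :
    ∑ b ∈ Finset.range n, (if p ≤ b ∧ b < q then (-1 : F) ^ b else 0) =
      (∑ i ∈ Finset.range q, (-1 : F) ^ i) - ∑ i ∈ Finset.range (min p q), (-1 : F) ^ i := by
  classical
  rw [← Finset.sum_filter]
  have hfe : (Finset.range n).filter (fun b => p ≤ b ∧ b < q) = Finset.Ico (min p q) q := by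
    ext b
    simp only [Finset.mem_filter, Finset.mem_range, Finset.mem_Ico]
    omega
  rw [hfe, Finset.sum_Ico_eq_sub _ (by omega)]

lemma final_sum {n k : ℕ} (hk : 2 ≤ k) (hkn : k ≤ n) (hodd : Odd (n + k)) (x' : ℕ → F) :
    ∑ a ∈ Finset.range n, ∑ b ∈ Finset.range n,
      (if a < b ∧ ((a < 2 ∧ (b < 2 ∨ k ≤ b)) ∨ k ≤ a) then
        (if b < 2 then 0
         else if a < 2 then (-1 : F) ^ (a + b + 1) * x' a
         else (-1 : F) ^ (a + b + k) * (x' b - x' a))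
       else 0)
    = (-1 : F) ^ (k - 1) * (x' 0 - x' 1) := by
  classical
  have hnk : Even n ↔ ¬ Even k := by
    have h1 : ¬ Even (n + k) := Nat.not_even_iff_odd.mpr hodd
    rw [Nat.even_add] at h1
    tauto
  set T1 : ℕ → ℕ → F := fun a b =>
    if a < 2 ∧ k ≤ b then (-1 : F) ^ (a + b + 1) * x' a else 0 with hT1
  set T2 : ℕ → ℕ → F := fun a b =>
    if k ≤ a ∧ a < b then (-1 : F) ^ (a + b + k) * (x' b - x' a) else 0 with hT2
  have step1 : ∑ a ∈ Finset.range n, ∑ b ∈ Finset.range n,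
      (if a < b ∧ ((a < 2 ∧ (b < 2 ∨ k ≤ b)) ∨ k ≤ a) then
        (if b < 2 then 0
         else if a < 2 then (-1 : F) ^ (a + b + 1) * x' a
         else (-1 : F) ^ (a + b + k) * (x' b - x' a))
       else 0)
      = (∑ a ∈ Finset.range n, ∑ b ∈ Finset.range n, T1 a b)
        + ∑ a ∈ Finset.range n, ∑ b ∈ Finset.range n, T2 a b := by
    rw [← Finset.sum_add_distrib]
    apply Finset.sum_congr rfl
    intro a _
    rw [← Finset.sum_add_distrib]
    apply Finset.sum_congr rfl
    intro b _
    rw [hT1, hT2]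
    dsimp only
    split_ifs <;> first | ring1 | (exfalso; omega)
  rw [step1]
  have hdelta : (∑ i ∈ Finset.range n, (-1 : F) ^ i) - (∑ i ∈ Finset.range k, (-1 : F) ^ i)
      = (-1 : F) ^ k := by
    rw [alt_sum, alt_sum]
    by_cases hk2 : Even k
    · rw [if_neg (fun h => (hnk.mp h) hk2), if_pos hk2, Even.neg_one_pow hk2]; ring
    · rw [if_pos (hnk.mpr hk2), if_neg hk2, Odd.neg_one_pow (Nat.not_even_iff_odd.mp hk2)]
      ring
  have part1 : (∑ a ∈ Finset.range n, ∑ b ∈ Finset.range n, T1 a b)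
      = (-1 : F) ^ (k - 1) * (x' 0 - x' 1) := by
    have hinner : ∀ a, ∑ b ∈ Finset.range n, T1 a b
        = (if a < 2 then (-1 : F) ^ (a + 1) * x' a * (-1 : F) ^ k else 0) := by
      intro a
      by_cases ha : a < 2
      · rw [if_pos ha]
        have hcg : ∀ b ∈ Finset.range n, T1 a b = (-1 : F) ^ (a + 1) * x' a *
            (if k ≤ b ∧ b < n then (-1 : F) ^ b else 0) := by
          intro b hb
          rw [Finset.mem_range] at hb
          rw [hT1]; dsimp only
          by_cases hkb : k ≤ b
          · rw [if_pos ⟨ha, hkb⟩, if_pos ⟨hkb, hb⟩,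
              show a + b + 1 = (a + 1) + b from by omega, pow_add]
            ring
          · rw [if_neg (by tauto), if_neg (by tauto)]; ring
        rw [Finset.sum_congr rfl hcg, ← Finset.mul_sum, filter_ico n k n le_rfl,
          Nat.min_eq_left hkn, hdelta]
      · rw [if_neg ha]
        apply Finset.sum_eq_zero
        intro b _
        rw [hT1]; dsimp only
        rw [if_neg (by tauto)]
    rw [Finset.sum_congr rfl (fun a _ => hinner a)]
    have h2n : 2 ≤ n := by omega
    rw [← Finset.sum_range_add_sum_Ico _ h2n]
    have hico : ∑ a ∈ Finset.Ico 2 n,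
        (if a < 2 then (-1 : F) ^ (a + 1) * x' a * (-1 : F) ^ k else 0) = 0 := by
      apply Finset.sum_eq_zero
      intro a ha
      rw [Finset.mem_Ico] at ha
      rw [if_neg (by omega)]
    rw [hico, Finset.sum_range_succ, Finset.sum_range_one,
      if_pos (by omega : (0 : ℕ) < 2), if_pos (by omega : (1 : ℕ) < 2)]
    have hpw : (-1 : F) ^ k = -(-1 : F) ^ (k - 1) := by
      conv_lhs => rw [show k = (k - 1) + 1 from by omega]
      rw [pow_succ]; ring
    rw [hpw]; ring
  have part2 : (∑ a ∈ Finset.range n, ∑ b ∈ Finset.range n, T2 a b) = 0 := by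
    set c : ℕ → ℕ → F := fun a b => if k ≤ a ∧ a < b then (-1 : F) ^ (a + b + k) else 0 with hc
    have hT2c : ∀ a b, T2 a b = c a b * x' b - c a b * x' a := by
      intro a b; rw [hT2, hc]; dsimp only; split_ifs <;> ring
    have hsum : ∀ cc, cc < n → (∑ a ∈ Finset.range n, c a cc) = ∑ b ∈ Finset.range n, c cc b := by
      intro cc hcc
      have hL : (∑ a ∈ Finset.range n, c a cc) = (-1 : F) ^ (cc + k) *
          ((∑ i ∈ Finset.range cc, (-1 : F) ^ i)
            - (∑ i ∈ Finset.range (min k cc), (-1 : F) ^ i)) := by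
        have hcg : ∀ a ∈ Finset.range n, c a cc = (-1 : F) ^ (cc + k) *
            (if k ≤ a ∧ a < cc then (-1 : F) ^ a else 0) := by
          intro a _
          rw [hc]; dsimp only
          by_cases hyp : k ≤ a ∧ a < cc
          · rw [if_pos hyp, if_pos hyp,
              show a + cc + k = a + (cc + k) from by omega, pow_add]
            ring
          · rw [if_neg hyp, if_neg hyp]; ring
        rw [Finset.sum_congr rfl hcg, ← Finset.mul_sum, filter_ico n k cc (by omega)]
      have hR : (∑ b ∈ Finset.range n, c cc b) = (-1 : F) ^ (cc + k) *
          (if k ≤ cc then ((∑ i ∈ Finset.range n, (-1 : F) ^ i)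
            - (∑ i ∈ Finset.range (cc + 1), (-1 : F) ^ i)) else 0) := by
        by_cases hkc : k ≤ cc
        · have hcg : ∀ b ∈ Finset.range n, c cc b = (-1 : F) ^ (cc + k) *
              (if cc + 1 ≤ b ∧ b < n then (-1 : F) ^ b else 0) := by
            intro b hb
            rw [Finset.mem_range] at hb
            rw [hc]; dsimp only
            by_cases hyp : cc < b
            · rw [if_pos ⟨hkc, hyp⟩, if_pos ⟨by omega, hb⟩,
                show cc + b + k = b + (cc + k) from by omega, pow_add]
              ring
            · rw [if_neg (by tauto), if_neg (by omega)]; ring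
          rw [Finset.sum_congr rfl hcg, ← Finset.mul_sum, filter_ico n (cc + 1) n le_rfl,
            if_pos hkc, Nat.min_eq_left (by omega)]
        · rw [if_neg hkc, mul_zero]
          apply Finset.sum_eq_zero
          intro b _
          rw [hc]; dsimp only
          rw [if_neg (by tauto)]
      rw [hL, hR]
      congr 1
      by_cases hkc : k ≤ cc
      · rw [if_pos hkc, Nat.min_eq_left hkc]
        rw [alt_sum, alt_sum, alt_sum, alt_sum]
        have h1 : Even (cc + 1) ↔ ¬ Even cc := Nat.even_add_one
        by_cases hc2 : Even cc <;> by_cases hk2 : Even k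
        · rw [if_pos hc2, if_pos hk2, if_neg (fun h => hnk.mp h hk2),
            if_neg (by rw [h1]; exact not_not_intro hc2)]
          try ring
        · rw [if_pos hc2, if_neg hk2, if_pos (hnk.mpr hk2),
            if_neg (by rw [h1]; exact not_not_intro hc2)]
          try ring
        · rw [if_neg hc2, if_pos hk2, if_neg (fun h => hnk.mp h hk2), if_pos (h1.mpr hc2)]
          try ring
        · rw [if_neg hc2, if_neg hk2, if_pos (hnk.mpr hk2), if_pos (h1.mpr hc2)]
          try ring
      · rw [if_neg hkc, Nat.min_eq_right (by omega)]
        ring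
    have e1 : (∑ a ∈ Finset.range n, ∑ b ∈ Finset.range n, T2 a b)
        = (∑ a ∈ Finset.range n, ∑ b ∈ Finset.range n, c a b * x' b)
          - ∑ a ∈ Finset.range n, ∑ b ∈ Finset.range n, c a b * x' a := by
      rw [← Finset.sum_sub_distrib]
      apply Finset.sum_congr rfl
      intro a _
      rw [← Finset.sum_sub_distrib]
      exact Finset.sum_congr rfl (fun b _ => hT2c a b)
    have e2 : (∑ a ∈ Finset.range n, ∑ b ∈ Finset.range n, c a b * x' b)
        = ∑ cc ∈ Finset.range n, (∑ a ∈ Finset.range n, c a cc) * x' cc := by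
      rw [Finset.sum_comm]
      exact Finset.sum_congr rfl (fun b _ => (Finset.sum_mul _ _ _).symm)
    have e3 : (∑ a ∈ Finset.range n, ∑ b ∈ Finset.range n, c a b * x' a)
        = ∑ cc ∈ Finset.range n, (∑ b ∈ Finset.range n, c cc b) * x' cc :=
      Finset.sum_congr rfl (fun a _ => (Finset.sum_mul _ _ _).symm)
    rw [e1, e2, e3, sub_eq_zero]
    apply Finset.sum_congr rfl
    intro cc hcc
    rw [Finset.mem_range] at hcc
    rw [hsum cc hcc]
  rw [part1, part2, add_zero]

end FinalSum
section Main
variable {F : Type*} [Field F]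

def Qp (n k : ℕ) : Fin n × Fin n → Prop := fun p =>
  (p.1 : ℕ) < (p.2 : ℕ) ∧
    (((p.1 : ℕ) < 2 ∧ ((p.2 : ℕ) < 2 ∨ k ≤ (p.2 : ℕ))) ∨ k ≤ (p.1 : ℕ))

open Classical in
noncomputable def SS (n k : ℕ) : Finset (Fin n × Fin n) :=
  Finset.univ.filter (Qp n k)

open Classical in
lemma mem_SS {n k : ℕ} (p : Fin n × Fin n) : p ∈ SS n k ↔ Qp n k p := by
  rw [SS, Finset.mem_filter]
  exact ⟨fun h => h.2, fun h => ⟨Finset.mem_univ _, h⟩⟩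

def ee {n k : ℕ} (hk : 2 ≤ k) (hkn : k ≤ n) : Fin n × Fin n → (Fin k → Fin n) := fun p =>
  if (p.2 : ℕ) < 2 then ff0 hkn
  else if (p.1 : ℕ) < 2 then ff1 hk hkn p.1 p.2
  else ff2 hk hkn p.1 p.2

lemma ff1_v0 {n k : ℕ} (hk : 2 ≤ k) (hkn : k ≤ n) (a b : Fin n) :
    ((ff1 hk hkn a b ⟨0, by omega⟩ : Fin n) : ℕ) = (a : ℕ) := by
  show (if (0 : ℕ) = 0 then (a : ℕ) else if 0 = k - 1 then (b : ℕ) else 0 + 1) = (a : ℕ)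
  rw [if_pos rfl]

lemma ff1_vl {n k : ℕ} (hk : 2 ≤ k) (hkn : k ≤ n) (a b : Fin n) :
    ((ff1 hk hkn a b ⟨k - 1, by omega⟩ : Fin n) : ℕ) = (b : ℕ) := by
  show (if k - 1 = 0 then (a : ℕ) else if k - 1 = k - 1 then (b : ℕ) else k - 1 + 1) = (b : ℕ)
  rw [if_neg (by omega), if_pos rfl]

lemma ff2_vk2 {n k : ℕ} (hk : 2 ≤ k) (hkn : k ≤ n) (a b : Fin n) :
    ((ff2 hk hkn a b ⟨k - 2, by omega⟩ : Fin n) : ℕ) = (a : ℕ) := by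
  show (if k - 2 = k - 2 then (a : ℕ) else if k - 2 = k - 1 then (b : ℕ) else k - 2 + 2) = (a : ℕ)
  rw [if_pos rfl]

lemma ff2_vl {n k : ℕ} (hk : 2 ≤ k) (hkn : k ≤ n) (a b : Fin n) :
    ((ff2 hk hkn a b ⟨k - 1, by omega⟩ : Fin n) : ℕ) = (b : ℕ) := by
  show (if k - 1 = k - 2 then (a : ℕ) else if k - 1 = k - 1 then (b : ℕ) else k - 1 + 2) = (b : ℕ)
  rw [if_neg (by omega), if_pos rfl]

lemma ff2_v02 {n k : ℕ} (hk : 2 ≤ k) (hkn : k ≤ n) {a b : Fin n} (ha : k ≤ (a : ℕ)) :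
    2 ≤ ((ff2 hk hkn a b ⟨0, by omega⟩ : Fin n) : ℕ) := by
  show 2 ≤ (if (0 : ℕ) = k - 2 then (a : ℕ) else if 0 = k - 1 then (b : ℕ) else 0 + 2)
  split_ifs <;> omega

lemma einj {n k : ℕ} (hk : 2 ≤ k) (hkn : k ≤ n) :
    ∀ p ∈ SS n k, ∀ q ∈ SS n k, ee hk hkn p = ee hk hkn q → p = q := by
  intro p hp q hq hpq
  have hQp := (mem_SS p).mp hp
  have hQq := (mem_SS q).mp hq
  unfold Qp at hQp hQq
  by_cases cp : (p.2 : ℕ) < 2 <;> by_cases cq : (q.2 : ℕ) < 2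
  · apply Prod.ext <;> apply Fin.ext <;> omega
  · exfalso
    rw [show ee hk hkn p = ff0 hkn from by unfold ee; rw [if_pos cp]] at hpq
    have hvl := congrArg Fin.val (congrFun hpq ⟨k - 1, by omega⟩)
    rw [ff0_val] at hvl
    by_cases cq1 : (q.1 : ℕ) < 2
    · rw [show ee hk hkn q = ff1 hk hkn q.1 q.2 from by
        unfold ee; rw [if_neg cq, if_pos cq1]] at hvl
      rw [ff1_vl] at hvl
      omega
    · rw [show ee hk hkn q = ff2 hk hkn q.1 q.2 from by
        unfold ee; rw [if_neg cq, if_neg cq1]] at hvl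
      rw [ff2_vl] at hvl
      omega
  · exfalso
    rw [show ee hk hkn q = ff0 hkn from by unfold ee; rw [if_pos cq]] at hpq
    have hvl := congrArg Fin.val (congrFun hpq ⟨k - 1, by omega⟩)
    rw [ff0_val] at hvl
    by_cases cp1 : (p.1 : ℕ) < 2
    · rw [show ee hk hkn p = ff1 hk hkn p.1 p.2 from by
        unfold ee; rw [if_neg cp, if_pos cp1]] at hvl
      rw [ff1_vl] at hvl
      omega
    · rw [show ee hk hkn p = ff2 hk hkn p.1 p.2 from by
        unfold ee; rw [if_neg cp, if_neg cp1]] at hvl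
      rw [ff2_vl] at hvl
      omega
  · by_cases cp1 : (p.1 : ℕ) < 2 <;> by_cases cq1 : (q.1 : ℕ) < 2
    · rw [show ee hk hkn p = ff1 hk hkn p.1 p.2 from by
        unfold ee; rw [if_neg cp, if_pos cp1],
        show ee hk hkn q = ff1 hk hkn q.1 q.2 from by
        unfold ee; rw [if_neg cq, if_pos cq1]] at hpq
      have hvl := congrArg Fin.val (congrFun hpq ⟨k - 1, by omega⟩)
      have hv0 := congrArg Fin.val (congrFun hpq ⟨0, by omega⟩)
      rw [ff1_vl, ff1_vl] at hvl
      rw [ff1_v0, ff1_v0] at hv0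
      apply Prod.ext <;> apply Fin.ext <;> omega
    · exfalso
      rw [show ee hk hkn p = ff1 hk hkn p.1 p.2 from by
        unfold ee; rw [if_neg cp, if_pos cp1],
        show ee hk hkn q = ff2 hk hkn q.1 q.2 from by
        unfold ee; rw [if_neg cq, if_neg cq1]] at hpq
      have hv0 := congrArg Fin.val (congrFun hpq ⟨0, by omega⟩)
      rw [ff1_v0] at hv0
      have := ff2_v02 hk hkn (a := q.1) (b := q.2) (by omega)
      omega
    · exfalso
      rw [show ee hk hkn p = ff2 hk hkn p.1 p.2 from by
        unfold ee; rw [if_neg cp, if_neg cp1],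
        show ee hk hkn q = ff1 hk hkn q.1 q.2 from by
        unfold ee; rw [if_neg cq, if_pos cq1]] at hpq
      have hv0 := congrArg Fin.val (congrFun hpq ⟨0, by omega⟩)
      rw [ff1_v0] at hv0
      have := ff2_v02 hk hkn (a := p.1) (b := p.2) (by omega)
      omega
    · rw [show ee hk hkn p = ff2 hk hkn p.1 p.2 from by
        unfold ee; rw [if_neg cp, if_neg cp1],
        show ee hk hkn q = ff2 hk hkn q.1 q.2 from by
        unfold ee; rw [if_neg cq, if_neg cq1]] at hpq
      have hvl := congrArg Fin.val (congrFun hpq ⟨k - 1, by omega⟩)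
      have hvk2 := congrArg Fin.val (congrFun hpq ⟨k - 2, by omega⟩)
      rw [ff2_vl, ff2_vl] at hvl
      rw [ff2_vk2, ff2_vk2] at hvk2
      apply Prod.ext <;> apply Fin.ext <;> omega

lemma mem_of_cover {n k : ℕ} (hk : 2 ≤ k) (hkn : k ≤ n) (f : Fin k → Fin n)
    (hmono : StrictMono f)
    (hcov : ∀ m : ℕ, 2 ≤ m → m ≤ k - 1 → ∃ i, (f i : ℕ) = m) :
    ∃ p ∈ SS n k, ee hk hkn p = f := by
  have h2n : 2 ≤ n := le_trans hk hkn
  rcases classify hk hkn f hmono hcov with h0 | ⟨h1, h2, h3⟩ | ⟨h1, h2⟩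
  · refine ⟨(⟨0, by omega⟩, ⟨1, by omega⟩), (mem_SS _).mpr ?_, ?_⟩
    · unfold Qp
      exact ⟨by show (0 : ℕ) < 1; omega,
        Or.inl ⟨by show (0 : ℕ) < 2; omega, Or.inl (by show (1 : ℕ) < 2; omega)⟩⟩
    · unfold ee
      rw [if_pos (by show (1 : ℕ) < 2; omega)]
      funext j; apply Fin.ext
      rw [ff0_val]
      exact (h0 j).symm
  · refine ⟨(f ⟨0, by omega⟩, f ⟨k - 1, by omega⟩), (mem_SS _).mpr ?_, ?_⟩
    · unfold Qp
      have hlt : (f ⟨0, by omega⟩ : ℕ) < (f ⟨k - 1, by omega⟩ : ℕ) :=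
        Fin.lt_def.mp (hmono (fmlt (by omega) (by omega) (by omega)))
      exact ⟨hlt, Or.inl ⟨h1, Or.inr h2⟩⟩
    · unfold ee
      dsimp only
      rw [if_neg (by omega), if_pos h1]
      funext j; apply Fin.ext
      rw [ff1_val]
      by_cases hj0 : (j : ℕ) = 0
      · rw [if_pos hj0, show j = (⟨0, by omega⟩ : Fin k) from Fin.ext hj0]
      · by_cases hjl : (j : ℕ) = k - 1
        · rw [if_neg hj0, if_pos hjl, show j = (⟨k - 1, by omega⟩ : Fin k) from Fin.ext hjl]
        · rw [if_neg hj0, if_neg hjl]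
          exact (h3 j hj0 hjl).symm
  · refine ⟨(f ⟨k - 2, by omega⟩, f ⟨k - 1, by omega⟩), (mem_SS _).mpr ?_, ?_⟩
    · unfold Qp
      have hlt : (f ⟨k - 2, by omega⟩ : ℕ) < (f ⟨k - 1, by omega⟩ : ℕ) :=
        Fin.lt_def.mp (hmono (fmlt (by omega) (by omega) (by omega)))
      exact ⟨hlt, Or.inr h1⟩
    · unfold ee
      dsimp only
      have hlt : (f ⟨k - 2, by omega⟩ : ℕ) < (f ⟨k - 1, by omega⟩ : ℕ) :=
        Fin.lt_def.mp (hmono (fmlt (by omega) (by omega) (by omega)))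
      rw [if_neg (by omega), if_neg (by omega)]
      funext j; apply Fin.ext
      rw [ff2_val]
      by_cases hj0 : (j : ℕ) = k - 2
      · rw [if_pos hj0, show j = (⟨k - 2, by omega⟩ : Fin k) from Fin.ext hj0]
      · by_cases hjl : (j : ℕ) = k - 1
        · rw [if_neg hj0, if_pos hjl, show j = (⟨k - 1, by omega⟩ : Fin k) from Fin.ext hjl]
        · rw [if_neg hj0, if_neg hjl]
          exact (h2 j hj0 hjl).symm

lemma det_of_no_cover {n k : ℕ} (hk : 2 ≤ k) (hkn : k ≤ n) (x : Fin n → F)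
    (f : Fin k → Fin n) {m : ℕ} (hm2 : 2 ≤ m) (hmk : m ≤ k - 1)
    (hnone : ∀ i, (f i : ℕ) ≠ m) :
    ((XM n k x).submatrix f id).det = 0 := by
  apply Matrix.det_eq_zero_of_column_eq_zero ⟨m - 1, by omega⟩
  intro i
  rw [Matrix.submatrix_apply, id, XM_e]
  rw [if_neg (by show ¬(m - 1 = 0); omega), if_neg (by show ¬(m - 1 = k - 1); omega),
    if_neg (by show ¬((f i : ℕ) = m - 1 + 1); have := hnone i; omega)]

end Main
/-- Lemma 3.1: the value of the Cullis determinant on the special matrix. -/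
theorem stmt3 {F : Type*} [Field F] {n k : ℕ} (hk : 2 ≤ k) (hkn : k ≤ n)
    (hodd : Odd (n + k)) (x : Fin n → F) :
    cullisDet (fun (i : Fin n) (j : Fin k) =>
      if (j : ℕ) = 0 then x i
      else if (j : ℕ) = k - 1 then (if 2 ≤ (i : ℕ) then (1 : F) else 0)
      else if (i : ℕ) = (j : ℕ) + 1 then 1 else 0) =
      (-1 : F) ^ (k - 1) * (x ⟨0, by omega⟩ - x ⟨1, by omega⟩) := by
  classical
  have h2n : 2 ≤ n := le_trans hk hkn
  show cullisDet (XM n k x) = (-1 : F) ^ (k - 1) * (x ⟨0, by omega⟩ - x ⟨1, by omega⟩)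
  unfold cullisDet
  have hvan : ∀ f ∈ (Finset.univ : Finset (Fin k → Fin n)),
      f ∉ (SS n k).image (ee hk hkn) →
      (if StrictMono f then
        (-1 : F) ^ (∑ j : Fin k, ((f j : ℕ) - (j : ℕ))) * ((XM n k x).submatrix f id).det
      else 0) = 0 := by
    intro f _ hf
    by_cases hmono : StrictMono f
    · rw [if_pos hmono]
      by_cases hcov : ∀ m : ℕ, 2 ≤ m → m ≤ k - 1 → ∃ i, (f i : ℕ) = m
      · exact absurd (Finset.mem_image.mpr
          (by obtain ⟨p, hp, hep⟩ := mem_of_cover hk hkn f hmono hcov; exact ⟨p, hp, hep⟩)) hf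
      · push_neg at hcov
        obtain ⟨m, hm2, hmk, hnone⟩ := hcov
        rw [det_of_no_cover hk hkn x f hm2 hmk hnone, mul_zero]
    · rw [if_neg hmono]
  rw [← Finset.sum_subset (Finset.subset_univ ((SS n k).image (ee hk hkn))) hvan]
  rw [Finset.sum_image (einj hk hkn)]
  set x' : ℕ → F := fun i => if h : i < n then x ⟨i, h⟩ else 0 with hx'
  have hx'v : ∀ (a : Fin n), x' (a : ℕ) = x a := by
    intro a
    rw [hx']
    exact dif_pos a.isLt
  have hterm : ∀ p ∈ SS n k,
      (if StrictMono (ee hk hkn p) then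
        (-1 : F) ^ (∑ j : Fin k, ((ee hk hkn p j : ℕ) - (j : ℕ))) *
          ((XM n k x).submatrix (ee hk hkn p) id).det
      else 0)
      = (if ((p.1 : ℕ) < (p.2 : ℕ) ∧
            (((p.1 : ℕ) < 2 ∧ ((p.2 : ℕ) < 2 ∨ k ≤ (p.2 : ℕ))) ∨ k ≤ (p.1 : ℕ))) then
          (if (p.2 : ℕ) < 2 then 0
           else if (p.1 : ℕ) < 2 then (-1 : F) ^ ((p.1 : ℕ) + (p.2 : ℕ) + 1) * x' (p.1 : ℕ)
           else (-1 : F) ^ ((p.1 : ℕ) + (p.2 : ℕ) + k) * (x' (p.2 : ℕ) - x' (p.1 : ℕ)))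
         else 0) := by
    intro p hp
    have hQ := (mem_SS p).mp hp
    have hQ' : (p.1 : ℕ) < (p.2 : ℕ) ∧
        (((p.1 : ℕ) < 2 ∧ ((p.2 : ℕ) < 2 ∨ k ≤ (p.2 : ℕ))) ∨ k ≤ (p.1 : ℕ)) := hQ
    rw [if_pos hQ', hx'v p.1, hx'v p.2]
    by_cases cp : (p.2 : ℕ) < 2
    · rw [if_pos cp]
      rw [show ee hk hkn p = ff0 hkn from by unfold ee; rw [if_pos cp]]
      rw [if_pos (ff0_mono hkn), det0x hk hkn x, mul_zero]
    · rw [if_neg cp]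
      by_cases cp1 : (p.1 : ℕ) < 2
      · rw [if_pos cp1]
        unfold Qp at hQ
        have hb : k ≤ (p.2 : ℕ) := by omega
        rw [show ee hk hkn p = ff1 hk hkn p.1 p.2 from by unfold ee; rw [if_neg cp, if_pos cp1]]
        rw [if_pos (ff1_mono hk hkn cp1 hb), wsum1 hk hkn cp1 hb, det1x hk hkn x cp1 hb]
        have he : (p.1 : ℕ) + (p.2 : ℕ) + 1 = ((p.1 : ℕ) + (p.2 : ℕ) - 1) + 2 := by omega
        rw [he, pow_add]
        ring
      · rw [if_neg cp1]
        unfold Qp at hQ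
        have ha : k ≤ (p.1 : ℕ) := by omega
        have hab : (p.1 : ℕ) < (p.2 : ℕ) := hQ.1
        rw [show ee hk hkn p = ff2 hk hkn p.1 p.2 from by unfold ee; rw [if_neg cp, if_neg cp1]]
        rw [if_pos (ff2_mono hk hkn ha hab), wsum2 hk hkn ha hab, det2x hk hkn x ha hab]
        have he : (p.1 : ℕ) + (p.2 : ℕ) + k
            = ((p.1 : ℕ) + (p.2 : ℕ) - 1) + ((k - 1) + 2) := by omega
        rw [he, pow_add, pow_add]
        ring
  rw [Finset.sum_congr rfl hterm]
  have hfin : ∑ p ∈ SS n k,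
      (if ((p.1 : ℕ) < (p.2 : ℕ) ∧
            (((p.1 : ℕ) < 2 ∧ ((p.2 : ℕ) < 2 ∨ k ≤ (p.2 : ℕ))) ∨ k ≤ (p.1 : ℕ))) then
          (if (p.2 : ℕ) < 2 then 0
           else if (p.1 : ℕ) < 2 then (-1 : F) ^ ((p.1 : ℕ) + (p.2 : ℕ) + 1) * x' (p.1 : ℕ)
           else (-1 : F) ^ ((p.1 : ℕ) + (p.2 : ℕ) + k) * (x' (p.2 : ℕ) - x' (p.1 : ℕ)))
         else 0)
      = ∑ a ∈ Finset.range n, ∑ b ∈ Finset.range n,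
      (if a < b ∧ ((a < 2 ∧ (b < 2 ∨ k ≤ b)) ∨ k ≤ a) then
        (if b < 2 then 0
         else if a < 2 then (-1 : F) ^ (a + b + 1) * x' a
         else (-1 : F) ^ (a + b + k) * (x' b - x' a))
       else 0) := by
    have hss : ∑ p ∈ SS n k, (if ((p.1 : ℕ) < (p.2 : ℕ) ∧
            (((p.1 : ℕ) < 2 ∧ ((p.2 : ℕ) < 2 ∨ k ≤ (p.2 : ℕ))) ∨ k ≤ (p.1 : ℕ))) then
          (if (p.2 : ℕ) < 2 then 0
           else if (p.1 : ℕ) < 2 then (-1 : F) ^ ((p.1 : ℕ) + (p.2 : ℕ) + 1) * x' (p.1 : ℕ)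
           else (-1 : F) ^ ((p.1 : ℕ) + (p.2 : ℕ) + k) * (x' (p.2 : ℕ) - x' (p.1 : ℕ)))
         else 0)
        = ∑ p : Fin n × Fin n, (if ((p.1 : ℕ) < (p.2 : ℕ) ∧
            (((p.1 : ℕ) < 2 ∧ ((p.2 : ℕ) < 2 ∨ k ≤ (p.2 : ℕ))) ∨ k ≤ (p.1 : ℕ))) then
          (if (p.2 : ℕ) < 2 then 0
           else if (p.1 : ℕ) < 2 then (-1 : F) ^ ((p.1 : ℕ) + (p.2 : ℕ) + 1) * x' (p.1 : ℕ)
           else (-1 : F) ^ ((p.1 : ℕ) + (p.2 : ℕ) + k) * (x' (p.2 : ℕ) - x' (p.1 : ℕ)))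
         else 0) := by
      apply Finset.sum_subset (Finset.subset_univ _)
      intro p _ hp
      have hnc : ¬((p.1 : ℕ) < (p.2 : ℕ) ∧
          (((p.1 : ℕ) < 2 ∧ ((p.2 : ℕ) < 2 ∨ k ≤ (p.2 : ℕ))) ∨ k ≤ (p.1 : ℕ))) :=
        fun hc => hp ((mem_SS p).mpr hc)
      rw [if_neg hnc]
    rw [hss, Fintype.sum_prod_type,
      ← Fin.sum_univ_eq_sum_range (fun a => ∑ b ∈ Finset.range n,
      (if a < b ∧ ((a < 2 ∧ (b < 2 ∨ k ≤ b)) ∨ k ≤ a) then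
        (if b < 2 then 0
         else if a < 2 then (-1 : F) ^ (a + b + 1) * x' a
         else (-1 : F) ^ (a + b + k) * (x' b - x' a))
       else 0)) n]
    apply Finset.sum_congr rfl
    intro a _
    rw [← Fin.sum_univ_eq_sum_range (fun b =>
      (if (a : ℕ) < b ∧ (((a : ℕ) < 2 ∧ (b < 2 ∨ k ≤ b)) ∨ k ≤ (a : ℕ)) then
        (if b < 2 then 0
         else if (a : ℕ) < 2 then (-1 : F) ^ ((a : ℕ) + b + 1) * x' (a : ℕ)
         else (-1 : F) ^ ((a : ℕ) + b + k) * (x' b - x' (a : ℕ)))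
       else 0)) n]
  have h0 : x' 0 = x ⟨0, by omega⟩ := dif_pos (by omega)
  have h1 : x' 1 = x ⟨1, by omega⟩ := dif_pos (by omega)
  rw [hfin, final_sum hk hkn hodd x', h0, h1]
end

section
/- Let F be a field and let n ≥ k ≥ 1 with n + k odd. Then for all 1 ≤ i ≤ n and 1 ≤ j ≤ k, the map SCS_{i,j} is an invertible linear map on M_{n×k}(F) satisfying det_{n,k}(SCS_{i,j}(X)) = det_{n,k}(X) for all n×k matrices X over F. -/
private lemma sm_le {n k : ℕ} {f : Fin k → Fin n} (hf : StrictMono f) :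
    ∀ j : Fin k, (j : ℕ) ≤ (f j : ℕ) := by
  intro j
  induction' hj : (j : ℕ) with m ih generalizing j
  · omega
  · have hm : m < k := by omega
    have h1 := ih ⟨m, hm⟩ rfl
    have h2 : f ⟨m, hm⟩ < f j := hf (by simp [Fin.lt_def, hj])
    simp only [Fin.lt_def] at h2
    omega

private lemma addOne_val {n : ℕ} (a : Fin (n+1)) (h : (a:ℕ) < n) :
    ((a+1 : Fin (n+1)) : ℕ) = (a:ℕ) + 1 :=
  Fin.val_add_one_of_lt (by rw [Fin.lt_def, Fin.val_last]; exact h)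

private lemma subOne_val {n : ℕ} (a : Fin (n+1)) (h : ¬ a = 0) :
    ((a - 1 : Fin (n+1)) : ℕ) = (a:ℕ) - 1 := by
  rw [Fin.coe_sub_one, if_neg h]

private lemma fin_vne {n : ℕ} {a : Fin (n+1)} (h : ¬ a = 0) : 0 < (a:ℕ) := by
  rcases Nat.eq_zero_or_pos (a:ℕ) with h' | h'
  · exact absurd (Fin.val_injective (by simpa using h')) h
  · exact h'

private lemma fin_nez {n : ℕ} {a : Fin (n+1)} (h : (a:ℕ) ≠ 0) : ¬ a = 0 := by
  intro he; rw [he] at h; simp at h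

private lemma fin_val_ne {n : ℕ} {a : Fin (n+1)} (h : ¬ a = Fin.last n) : (a:ℕ) ≠ n := by
  intro he; exact h (Fin.val_injective (by rw [he, Fin.val_last]))

private lemma fin_ne_last {n : ℕ} {a : Fin (n+1)} (h : (a:ℕ) ≠ n) : ¬ a = Fin.last n := by
  intro he; rw [he, Fin.val_last] at h; exact h rfl

private def shiftFun {N K : ℕ} (f : Fin (K+1) → Fin (N+1)) : Fin (K+1) → Fin (N+1) :=
  if f (Fin.last K) = Fin.last N
    then (fun a => if a = 0 then 0 else f (a - 1) + 1)
    else (fun a => f a + 1)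

private def unshiftFun {N K : ℕ} (g : Fin (K+1) → Fin (N+1)) : Fin (K+1) → Fin (N+1) :=
  if g 0 = 0
    then (fun a => if a = Fin.last K then Fin.last N else g (a + 1) - 1)
    else (fun a => g a - 1)

private lemma shiftFun_strictMono {N K : ℕ} {f : Fin (K+1) → Fin (N+1)}
    (hf : StrictMono f) : StrictMono (shiftFun f) := by
  unfold shiftFun
  by_cases h2 : f (Fin.last K) = Fin.last N
  · rw [if_pos h2]
    intro a b hab
    rw [Fin.lt_def] at hab
    rw [Fin.lt_def]
    dsimp only
    have hb0 : ¬ b = 0 := fin_nez (by omega)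
    rw [if_neg hb0]
    have hbK : ((b - 1 : Fin (K+1)) : ℕ) = (b:ℕ) - 1 := subOne_val b hb0
    have hblt : f (b-1) < f (Fin.last K) := by
      apply hf
      rw [Fin.lt_def, hbK, Fin.val_last]
      have := b.isLt
      have := fin_vne hb0
      omega
    have hbN : (f (b-1) : ℕ) < N := by
      rw [Fin.lt_def, h2, Fin.val_last] at hblt; exact hblt
    have hval : ((f (b-1) + 1 : Fin (N+1)) : ℕ) = (f (b-1) : ℕ) + 1 := addOne_val _ hbN
    by_cases ha : a = 0
    · rw [if_pos ha, hval]
      simp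
    · rw [if_neg ha]
      have haK : ((a - 1 : Fin (K+1)) : ℕ) = (a:ℕ) - 1 := subOne_val a ha
      have halt : f (a-1) < f (b-1) := by
        apply hf
        rw [Fin.lt_def, haK, hbK]
        have := fin_vne ha
        omega
      have haN : (f (a-1) : ℕ) < N := by
        rw [Fin.lt_def] at halt
        omega
      rw [hval, addOne_val _ haN]
      rw [Fin.lt_def] at halt
      omega
  · rw [if_neg h2]
    have hfa : ∀ a, (f a : ℕ) < N := by
      intro a
      have h1 : (f a : ℕ) ≤ (f (Fin.last K) : ℕ) := hf.monotone (Fin.le_last a)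
      have h2' := fin_val_ne h2
      have := (f (Fin.last K)).isLt
      omega
    intro a b hab
    rw [Fin.lt_def]
    dsimp only
    rw [addOne_val _ (hfa a), addOne_val _ (hfa b)]
    have := hf hab
    rw [Fin.lt_def] at this
    omega

private lemma unshiftFun_strictMono {N K : ℕ} {g : Fin (K+1) → Fin (N+1)}
    (hg : StrictMono g) : StrictMono (unshiftFun g) := by
  unfold unshiftFun
  by_cases h0 : g 0 = 0
  · rw [if_pos h0]
    intro a b hab
    rw [Fin.lt_def] at hab
    rw [Fin.lt_def]
    dsimp only
    have ha : ¬ a = Fin.last K := fin_ne_last (by have := b.isLt; omega)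
    have ha1 : ((a + 1 : Fin (K+1)) : ℕ) = (a:ℕ) + 1 := by
      apply addOne_val
      have := fin_val_ne ha
      have := a.isLt; omega
    have hga : (0 : Fin (N+1)) < g (a+1) := by
      rw [← h0]; apply hg
      rw [Fin.lt_def, ha1]
      simp
    rw [Fin.lt_def] at hga
    simp only [Fin.val_zero] at hga
    have hgane : ¬ g (a+1) = 0 := fin_nez (by omega)
    have hsub : ((g (a+1) - 1 : Fin (N+1)) : ℕ) = (g (a+1) : ℕ) - 1 := subOne_val _ hgane
    rw [if_neg ha]
    by_cases hb : b = Fin.last K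
    · rw [if_pos hb, hsub, Fin.val_last]
      have := (g (a+1)).isLt
      omega
    · rw [if_neg hb]
      have hb1 : ((b + 1 : Fin (K+1)) : ℕ) = (b:ℕ) + 1 := by
        apply addOne_val
        have := fin_val_ne hb
        have := b.isLt; omega
      have hltb : g (a+1) < g (b+1) := by
        apply hg
        rw [Fin.lt_def, ha1, hb1]
        omega
      rw [Fin.lt_def] at hltb
      have hgbne : ¬ g (b+1) = 0 := fin_nez (by omega)
      rw [hsub, subOne_val _ hgbne]
      omega
  · rw [if_neg h0]
    have h0' : (0:ℕ) < (g 0 : ℕ) := fin_vne h0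
    intro a b hab
    have hltb := hg hab
    have hga : (g 0 : ℕ) ≤ (g a : ℕ) := hg.monotone (Fin.zero_le a)
    have hgb : (g 0 : ℕ) ≤ (g b : ℕ) := hg.monotone (Fin.zero_le b)
    rw [Fin.lt_def] at hltb
    rw [Fin.lt_def]
    dsimp only
    rw [subOne_val _ (fin_nez (by omega)), subOne_val _ (fin_nez (by omega))]
    omega

open Fin.CommRing Fin.NatCast in
private lemma unshift_shift {N K : ℕ} {f : Fin (K+1) → Fin (N+1)}
    (hf : StrictMono f) : unshiftFun (shiftFun f) = f := by
  unfold shiftFun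
  by_cases h2 : f (Fin.last K) = Fin.last N
  · rw [if_pos h2]
    unfold unshiftFun
    rw [if_pos (by simp)]
    funext a
    dsimp only
    by_cases ha : a = Fin.last K
    · rw [if_pos ha, ha, h2]
    · rw [if_neg ha]
      have ha1 : ((a + 1 : Fin (K+1)) : ℕ) = (a:ℕ) + 1 := by
        apply addOne_val
        have := fin_val_ne ha
        have := a.isLt; omega
      have hne : ¬ (a + 1 : Fin (K+1)) = 0 := fin_nez (by omega)
      rw [if_neg hne]
      have h3 : (a + 1 - 1 : Fin (K+1)) = a := by ring
      rw [h3]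
      ring
  · rw [if_neg h2]
    have hfa : ∀ b, (f b : ℕ) < N := by
      intro b
      have h1 : (f b : ℕ) ≤ (f (Fin.last K) : ℕ) := hf.monotone (Fin.le_last b)
      have h2' := fin_val_ne h2
      have := (f (Fin.last K)).isLt
      omega
    unfold unshiftFun
    rw [if_neg (by
      apply fin_nez
      show ((f 0 + 1 : Fin (N+1)) : ℕ) ≠ 0
      rw [addOne_val _ (hfa 0)]; omega)]
    funext a
    dsimp only
    ring

open Fin.CommRing Fin.NatCast in
private lemma shift_unshift {N K : ℕ} {g : Fin (K+1) → Fin (N+1)}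
    (hg : StrictMono g) : shiftFun (unshiftFun g) = g := by
  unfold unshiftFun
  by_cases h0 : g 0 = 0
  · rw [if_pos h0]
    unfold shiftFun
    rw [if_pos (by simp)]
    funext a
    dsimp only
    by_cases ha : a = 0
    · rw [if_pos ha, ha, h0]
    · rw [if_neg ha]
      have haK : ((a - 1 : Fin (K+1)) : ℕ) = (a:ℕ) - 1 := subOne_val a ha
      have hne : ¬ (a - 1 : Fin (K+1)) = Fin.last K := by
        apply fin_ne_last
        rw [haK]
        have := fin_vne ha
        have := a.isLt; omega
      rw [if_neg hne]
      have h3 : (a - 1 + 1 : Fin (K+1)) = a := by ring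
      rw [h3]
      ring
  · rw [if_neg h0]
    have h0' : (0:ℕ) < (g 0 : ℕ) := fin_vne h0
    have hgl : (0:ℕ) < (g (Fin.last K) : ℕ) := by
      have := hg.monotone (Fin.zero_le (Fin.last K)); omega
    unfold shiftFun
    rw [if_neg (by
      apply fin_ne_last
      show ((g (Fin.last K) - 1 : Fin (N+1)) : ℕ) ≠ N
      rw [subOne_val _ (fin_nez (by omega))]
      have := (g (Fin.last K)).isLt
      omega)]
    funext a
    dsimp only
    ring

open Fin.CommRing Fin.NatCast in
private lemma shift_term {F : Type*} [Field F] {N K : ℕ} (hNK : Odd (N - K))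
    (X : Matrix (Fin (N+1)) (Fin (K+1)) F) {f : Fin (K+1) → Fin (N+1)} (hf : StrictMono f) :
    (-1:F) ^ (∑ j : Fin (K+1), ((f j : ℕ) - (j:ℕ))) *
      ((Matrix.of fun p q => - X (p + 1) q).submatrix f id).det
    = (-1:F) ^ (∑ j : Fin (K+1), ((shiftFun f j : ℕ) - (j:ℕ))) *
      (X.submatrix (shiftFun f) id).det := by
  have hdet1 : ((Matrix.of fun p q => - X (p + 1) q).submatrix f id)
      = - (X.submatrix (fun a => f a + 1) id) := by
    ext a b; simp [Matrix.submatrix_apply]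
  rw [hdet1, Matrix.det_neg, Fintype.card_fin]
  unfold shiftFun
  by_cases h2 : f (Fin.last K) = Fin.last N
  · rw [if_pos h2]
    set g : Fin (K+1) → Fin (N+1) := fun a => if a = 0 then 0 else f (a - 1) + 1 with hg
    have hperm : ∀ a, f a + 1 = g (finRotate (K+1) a) := by
      intro a
      rw [finRotate_succ_apply]
      by_cases ha : a = Fin.last K
      · subst ha
        rw [h2, hg]
        dsimp only
        rw [Fin.last_add_one, Fin.last_add_one, if_pos rfl]
      · have ha1 : ((a + 1 : Fin (K+1)) : ℕ) = (a:ℕ) + 1 := by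
          apply addOne_val; have := fin_val_ne ha; have := a.isLt; omega
        have hne : ¬ (a + 1 : Fin (K+1)) = 0 := fin_nez (by omega)
        rw [hg]
        dsimp only
        rw [if_neg hne]
        have h3 : (a + 1 - 1 : Fin (K+1)) = a := by ring
        rw [h3]
    have hsub : X.submatrix (fun a => f a + 1) id
        = (X.submatrix g id).submatrix (finRotate (K+1)) id := by
      ext a b; simp [Matrix.submatrix_apply, hperm a]
    rw [hsub, Matrix.det_permute]
    have hg0 : g 0 = 0 := by simp [hg]
    have hgs : ∀ j : Fin K, (g j.succ : ℕ) = (f j.castSucc : ℕ) + 1 := by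
      intro j
      have hne : ¬ (j.succ : Fin (K+1)) = 0 := fin_nez (by simp)
      have hsub1 : (j.succ - 1 : Fin (K+1)) = j.castSucc := by
        apply Fin.val_injective
        rw [subOne_val _ hne, Fin.val_succ, Fin.coe_castSucc]
        omega
      have hlt : (f j.castSucc : ℕ) < N := by
        have := hf (Fin.castSucc_lt_last j)
        rw [Fin.lt_def, h2, Fin.val_last] at this
        exact this
      rw [hg]
      dsimp only
      rw [if_neg hne, hsub1, addOne_val _ hlt]
    have hS : (∑ j : Fin (K+1), ((f j : ℕ) - (j:ℕ)))
        = (∑ j : Fin (K+1), ((g j : ℕ) - (j:ℕ))) + (N - K) := by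
      rw [Fin.sum_univ_castSucc (f := fun j => ((f j : ℕ) - (j:ℕ))),
          Fin.sum_univ_succ (f := fun j => ((g j : ℕ) - (j:ℕ)))]
      rw [h2, hg0]
      simp only [Fin.val_last, Fin.val_zero, Nat.sub_zero, Fin.val_succ, Fin.coe_castSucc]
      have h5 : ∀ j : Fin K, (g j.succ : ℕ) - ((j:ℕ) + 1) = (f j.castSucc : ℕ) - (j:ℕ) := by
        intro j; rw [hgs j]; omega
      rw [Finset.sum_congr rfl fun j _ => h5 j]
      omega
    have hcast : ((((Equiv.Perm.sign (finRotate (K+1)) : ℤˣ) : ℤ) : F)) = ((-1:F))^K := by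
      rw [sign_finRotate]; push_cast; ring
    have hA : ((-1:F)) ^ (∑ j : Fin (K+1), ((f j : ℕ) - (j:ℕ)))
        = -((-1:F)) ^ (∑ j : Fin (K+1), ((g j : ℕ) - (j:ℕ))) := by
      rw [hS, pow_add, hNK.neg_one_pow]; ring
    have hB : ((-1:F))^(K+1) * ((-1:F))^K = -1 := by
      rw [← pow_add]
      exact Odd.neg_one_pow ⟨K, by ring⟩
    calc ((-1:F)) ^ (∑ j : Fin (K+1), ((f j : ℕ) - (j:ℕ))) *
          ((-1:F)^(K+1) * (((Equiv.Perm.sign (finRotate (K+1)) : ℤˣ) : ℤ) * (X.submatrix g id).det))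
        = ((-1:F)) ^ (∑ j : Fin (K+1), ((g j : ℕ) - (j:ℕ))) * (X.submatrix g id).det *
            (-((-1:F)^(K+1) * (-1:F)^K)) := by
          rw [hA, hcast]; ring
      _ = ((-1:F)) ^ (∑ j : Fin (K+1), ((g j : ℕ) - (j:ℕ))) * (X.submatrix g id).det := by
          rw [hB]; ring
  · rw [if_neg h2]
    have hfa : ∀ a, (f a : ℕ) < N := by
      intro a
      have h1 : (f a : ℕ) ≤ (f (Fin.last K) : ℕ) := hf.monotone (Fin.le_last a)
      have h2' := fin_val_ne h2
      have := (f (Fin.last K)).isLt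
      omega
    have hS : (∑ j : Fin (K+1), (((f j + 1 : Fin (N+1)) : ℕ) - (j:ℕ)))
        = (∑ j : Fin (K+1), ((f j : ℕ) - (j:ℕ))) + (K+1) := by
      have h4 : ∀ j : Fin (K+1), ((f j + 1 : Fin (N+1)) : ℕ) - (j:ℕ)
          = ((f j : ℕ) - (j:ℕ)) + 1 := by
        intro j
        rw [addOne_val _ (hfa j)]
        have := sm_le hf j
        omega
      rw [Finset.sum_congr rfl fun j _ => h4 j, Finset.sum_add_distrib]
      simp
    rw [hS, pow_add]
    ring

private lemma cullisDet_shift {F : Type*} [Field F] {N K : ℕ} (hNK : Odd (N - K))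
    (X : Matrix (Fin (N+1)) (Fin (K+1)) F) :
    cullisDet (Matrix.of fun p q => - X (p + 1) q) = cullisDet X := by
  classical
  unfold cullisDet
  rw [← Finset.sum_filter, ← Finset.sum_filter]
  refine Finset.sum_nbij' shiftFun unshiftFun ?_ ?_ ?_ ?_ ?_
  · intro f hfm
    simp only [Finset.mem_filter, Finset.mem_univ, true_and] at hfm ⊢
    exact shiftFun_strictMono hfm
  · intro g hgm
    simp only [Finset.mem_filter, Finset.mem_univ, true_and] at hgm ⊢
    exact unshiftFun_strictMono hgm
  · intro f hfm
    simp only [Finset.mem_filter, Finset.mem_univ, true_and] at hfm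
    exact unshift_shift hfm
  · intro g hgm
    simp only [Finset.mem_filter, Finset.mem_univ, true_and] at hgm
    exact shift_unshift hgm
  · intro f hfm
    simp only [Finset.mem_filter, Finset.mem_univ, true_and] at hfm
    exact shift_term hNK X hfm

open Fin.CommRing Fin.NatCast in
private lemma cullisDet_shift_pow {F : Type*} [Field F] {N K : ℕ} (hNK : Odd (N - K))
    (X : Matrix (Fin (N+1)) (Fin (K+1)) F) (m : ℕ) :
    cullisDet (Matrix.of fun p q => (-1:F)^m * X (p + (m : Fin (N+1))) q) = cullisDet X := by
  induction m with
  | zero =>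
    have h : (Matrix.of fun p q => (-1:F)^0 * X (p + ((0:ℕ) : Fin (N+1))) q) = X := by
      ext p q; simp
    rw [h]
  | succ m ih =>
    have h : (Matrix.of fun p q => (-1:F)^(m+1) * X (p + (((m+1:ℕ)) : Fin (N+1))) q)
        = Matrix.of (fun p q =>
            - (Matrix.of fun p' q' => (-1:F)^m * X (p' + ((m:ℕ) : Fin (N+1))) q') (p + 1) q) := by
      ext p q
      simp only [Matrix.of_apply]
      have h1 : (p + 1) + ((m:ℕ) : Fin (N+1)) = p + (((m+1:ℕ)) : Fin (N+1)) := by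
        push_cast
        ring
      rw [← h1]
      ring
    rw [h, cullisDet_shift hNK, ih]

private lemma cullisDet_colop {F : Type*} [Field F] {n k : ℕ}
    (σ : Equiv.Perm (Fin k)) (c : Fin k → F)
    (hdet : ∀ M : Matrix (Fin k) (Fin k) F,
      (Matrix.of fun a b => c b * M a (σ b)).det = M.det)
    (X : Matrix (Fin n) (Fin k) F) :
    cullisDet (Matrix.of fun p q => c q * X p (σ q)) = cullisDet X := by
  unfold cullisDet
  refine Finset.sum_congr rfl fun f _ => ?_
  by_cases hf : StrictMono f
  · simp only [hf, if_true]
    congr 1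
    exact hdet (X.submatrix f id)
  · simp [hf]

private lemma colop_det {F : Type*} [Field F] {k : ℕ} (hk : 1 ≤ k) (j : Fin k)
    (M : Matrix (Fin k) (Fin k) F) :
    (Matrix.of fun a b =>
      (if b = (⟨0, by omega⟩ : Fin k) ∧ j ≠ (⟨0, by omega⟩ : Fin k) then (-1:F) else 1)
        * M a (Equiv.swap (⟨0, by omega⟩ : Fin k) j b)).det = M.det := by
  set z : Fin k := ⟨0, by omega⟩ with hz
  have h1 : (Matrix.of fun a b =>
      (if b = z ∧ j ≠ z then (-1:F) else 1) * M a (Equiv.swap z j b))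
      = Matrix.of fun a b =>
      (if b = z ∧ j ≠ z then (-1:F) else 1) * (M.submatrix id (Equiv.swap z j)) a b := rfl
  rw [h1, Matrix.det_mul_row, Matrix.det_permute']
  by_cases hj : j = z
  · subst hj
    simp
  · have hprod : (∏ b : Fin k, (if b = z ∧ j ≠ z then (-1:F) else 1)) = -1 := by
      have h2 : ∀ b : Fin k, (if b = z ∧ j ≠ z then (-1:F) else 1) = if b = z then -1 else 1 := by
        intro b; by_cases hb : b = z <;> simp [hb, hj]
      rw [Finset.prod_congr rfl fun b _ => h2 b]
      simp
    rw [hprod, Equiv.Perm.sign_swap (by simpa using fun h => hj h.symm)]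
    push_cast
    ring

/-- Lemma 3.4: the map `SCS_{i,j}` (cyclic row shift sending row `i` to the
top, swap of columns `1` and `j`, sign adjustments) is an invertible linear
map preserving the Cullis determinant when `n + k` is odd. Indices here are
0-based: the 1-based index `i` of the paper corresponds to `i : Fin n`. -/
theorem stmt5 {F : Type*} [Field F] {n k : ℕ} (hk : 1 ≤ k) (hkn : k ≤ n)
    (hodd : Odd (n + k)) (i : Fin n) (j : Fin k) :
    ∃ T : Matrix (Fin n) (Fin k) F ≃ₗ[F] Matrix (Fin n) (Fin k) F,
      (∀ (X : Matrix (Fin n) (Fin k) F) (p : Fin n) (q : Fin k),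
        T X p q = (-1 : F) ^ (i : ℕ) *
          (if q = (⟨0, by omega⟩ : Fin k) ∧ j ≠ (⟨0, by omega⟩ : Fin k)
            then (-1 : F) else 1) *
          X (i + p) (Equiv.swap (⟨0, by omega⟩ : Fin k) j q)) ∧
      (∀ X, cullisDet (T X) = cullisDet X) := by
  classical
  obtain ⟨N, rfl⟩ : ∃ N, n = N + 1 := ⟨n - 1, by omega⟩
  obtain ⟨K, rfl⟩ : ∃ K, k = K + 1 := ⟨k - 1, by omega⟩
  have hNK : Odd (N - K) := by
    obtain ⟨t, ht⟩ := hodd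
    exact ⟨(N - K - 1) / 2, by omega⟩
  set z : Fin (K+1) := (⟨0, by omega⟩ : Fin (K+1)) with hzdef
  set ε : Fin (K+1) → F := fun q => if q = z ∧ j ≠ z then (-1:F) else 1 with hε
  set σ : Equiv.Perm (Fin (K+1)) := Equiv.swap z j with hσ
  have hε2 : ∀ q, ε q * ε q = 1 := by
    intro q
    by_cases h : q = z ∧ j ≠ z <;> simp [hε, h]
  have hpow2 : ((-1:F))^(i:ℕ) * ((-1:F))^(i:ℕ) = 1 := by
    rw [← pow_add]
    exact Even.neg_one_pow ⟨(i:ℕ), rfl⟩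
  refine ⟨LinearEquiv.ofLinear
    { toFun := fun X => Matrix.of fun p q => (-1:F)^(i:ℕ) * ε q * X (i + p) (σ q)
      map_add' := by intro X Y; ext p q; simp only [Matrix.of_apply, Matrix.add_apply]; ring
      map_smul' := by
        intro c X; ext p q
        simp only [Matrix.of_apply, Matrix.smul_apply, RingHom.id_apply, smul_eq_mul]; ring }
    { toFun := fun Y => Matrix.of fun p q => (-1:F)^(i:ℕ) * ε (σ q) * Y (p - i) (σ q)
      map_add' := by intro X Y; ext p q; simp only [Matrix.of_apply, Matrix.add_apply]; ring
      map_smul' := by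
        intro c X; ext p q
        simp only [Matrix.of_apply, Matrix.smul_apply, RingHom.id_apply, smul_eq_mul]; ring }
    ?_ ?_, ?_, ?_⟩
  · apply LinearMap.ext
    intro Y
    ext p q
    simp only [LinearMap.comp_apply, LinearMap.coe_mk, AddHom.coe_mk, Matrix.of_apply,
      LinearMap.id_apply]
    rw [Equiv.swap_apply_self]
    open Fin.CommRing Fin.NatCast in
    have h1 : i + p - i = p := by ring
    rw [h1]
    have h3 : (-1:F)^(i:ℕ) * ε q * ((-1:F)^(i:ℕ) * ε q * Y p q)
        = ((-1:F)^(i:ℕ) * (-1:F)^(i:ℕ)) * (ε q * ε q) * Y p q := by ring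
    rw [h3, hpow2, hε2]
    ring
  · apply LinearMap.ext
    intro Y
    ext p q
    simp only [LinearMap.comp_apply, LinearMap.coe_mk, AddHom.coe_mk, Matrix.of_apply,
      LinearMap.id_apply]
    rw [Equiv.swap_apply_self]
    open Fin.CommRing Fin.NatCast in
    have h1 : i + (p - i) = p := by ring
    rw [h1]
    have h3 : (-1:F)^(i:ℕ) * ε (σ q) * ((-1:F)^(i:ℕ) * ε (σ q) * Y p q)
        = ((-1:F)^(i:ℕ) * (-1:F)^(i:ℕ)) * (ε (σ q) * ε (σ q)) * Y p q := by ring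
    rw [h3, hpow2, hε2]
    ring
  · intro X p q
    rfl
  · intro X
    show cullisDet (Matrix.of fun p q => (-1:F)^(i:ℕ) * ε q * X (i + p) (σ q)) = cullisDet X
    open Fin.CommRing Fin.NatCast in
    have hmat : (Matrix.of fun p q => (-1:F)^(i:ℕ) * ε q * X (i + p) (σ q))
        = Matrix.of (fun p q => ε q *
            (Matrix.of fun p' q' =>
              (-1:F)^(i:ℕ) * X (p' + (((i:ℕ)) : Fin (N+1))) q') p (σ q)) := by
      ext p q
      simp only [Matrix.of_apply]
      have h4 : p + (((i:ℕ)) : Fin (N+1)) = i + p := by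
        rw [Fin.cast_val_eq_self]; ring
      rw [h4]
      ring
    rw [hmat, cullisDet_colop σ ε (fun M => colop_det hk j M),
      cullisDet_shift_pow hNK X (i:ℕ)]
end

section
/- Let F be a field and let n − 1 ≥ k ≥ 1. Then for every (n−1)×k matrix Y over F, det_{(n-1),k}(Y) = det_{n,k}(L^+(Y)). -/
/-- `L⁺`: append a zero row at the bottom. -/
def Lplus {F : Type*} [Field F] {n k : ℕ}
    (Y : Matrix (Fin (n - 1)) (Fin k) F) : Matrix (Fin n) (Fin k) F :=
  fun i j => if h : (i : ℕ) < n - 1 then Y ⟨i, h⟩ j else 0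

theorem Fin.strictMono_castLE_comp_iff {m n k : ℕ} (h : m ≤ n) (f : Fin k → Fin m) :
    StrictMono (Fin.castLE h ∘ f) ↔ StrictMono f := by
  simp only [StrictMono, Function.comp_apply, Fin.castLE_lt_castLE_iff]

theorem det_submatrix_eq_zero_of_notMem_range_castLE {R : Type*} [CommRing R] {m n k : ℕ}
    (h : m ≤ n) (X : Matrix (Fin n) (Fin k) R) (hX : ∀ i : Fin n, m ≤ (i : ℕ) → X i = 0)
    (g : Fin k → Fin n) (hg : g ∉ Set.range (Fin.castLE h ∘ ·)) :
    (X.submatrix g id).det = 0 := by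
  obtain ⟨j, hj⟩ : ∃ j, m ≤ (g j : ℕ) := by
    by_contra! hlt
    exact hg ⟨fun j => ⟨g j, hlt j⟩, rfl⟩
  exact Matrix.det_eq_zero_of_row_eq_zero j fun j' => by simp [hX _ hj]

theorem cullisDet_submatrix_castLE_of_rows_eq_zero {F : Type*} [Field F] {m n k : ℕ}
    (h : m ≤ n) (X : Matrix (Fin n) (Fin k) F) (hX : ∀ i : Fin n, m ≤ (i : ℕ) → X i = 0) :
    cullisDet (X.submatrix (Fin.castLE h) id) = cullisDet X := by
  classical
  refine Fintype.sum_of_injective (Fin.castLE h ∘ ·) (Fin.castLE_injective h).comp_left _ _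
    (fun g hg => by simp [det_submatrix_eq_zero_of_notMem_range_castLE h X hX g hg]) fun f => ?_
  simp only [Fin.strictMono_castLE_comp_iff, Function.comp_apply, Fin.val_castLE,
    Matrix.submatrix_submatrix, Function.comp_id]

theorem Lplus_apply_of_le {F : Type*} [Field F] {n k : ℕ} (Y : Matrix (Fin (n - 1)) (Fin k) F)
    (i : Fin n) (hi : n - 1 ≤ (i : ℕ)) : Lplus Y i = 0 := by
  ext j
  simp [Lplus, Nat.not_lt.mpr hi]

theorem Lplus_submatrix_castLE {F : Type*} [Field F] {n k : ℕ}
    (Y : Matrix (Fin (n - 1)) (Fin k) F) :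
    (Lplus Y).submatrix (Fin.castLE (Nat.sub_le n 1)) id = Y := by
  ext i j
  simp [Lplus]

theorem stmt7_general {F : Type*} [Field F] {n k : ℕ}
    (Y : Matrix (Fin (n - 1)) (Fin k) F) :
    cullisDet Y = cullisDet (Lplus Y : Matrix (Fin n) (Fin k) F) := by
  conv_lhs => rw [← Lplus_submatrix_castLE Y]
  exact cullisDet_submatrix_castLE_of_rows_eq_zero _ _ (Lplus_apply_of_le Y)

/-- Lemma 4.7: `det_{(n-1),k}(Y) = det_{n,k}(L⁺(Y))`. -/
theorem stmt7 {F : Type*} [Field F] {n k : ℕ} (hk : 1 ≤ k) (hkn : k ≤ n - 1)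
    (Y : Matrix (Fin (n - 1)) (Fin k) F) :
    cullisDet Y = cullisDet (Lplus Y : Matrix (Fin n) (Fin k) F) :=
  stmt7_general Y
end

section
/- Let F be a field with more than k elements, let n > k ≥ 1 with n + k odd, let S be a linear map on M_{(n-1)×k}(F), and define the linear map T on M_{n×k}(F) by T = L^+ ∘ S ∘ L^-. If there exist an (n−1)×(n−1) matrix A' and a k×k matrix B' over F satisfying det_{(n-1),k}(A'(|d]) · det(B') = sgn(d) for every k-element subset d of {1,...,n−1} and S(Y) = A'YB' for all (n−1)×k matrices Y, then there exist an n×n matrix A and a k×k matrix B over F satisfying det_{n,k}(A(|d]) · det(B) = sgn(d) for every k-element subset d of {1,...,n} and T(X) = AXB for all n×k matrices X. -/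
/-- `L⁻`: subtract the last row from the others and delete it. -/
def Lminus {F : Type*} [Field F] {n k : ℕ}
    (X : Matrix (Fin n) (Fin k) F) : Matrix (Fin (n - 1)) (Fin k) F :=
  fun i j => X ⟨i, by have := i.isLt; omega⟩ j - X ⟨n - 1, by have := i.isLt; omega⟩ j


open Finset
open scoped Matrix

theorem neg_one_pow_sub_eq_pow_add {R : Type*} [Ring R] {a b : ℕ} (h : b ≤ a) :
    (-1 : R) ^ (a - b) = (-1) ^ (a + b) := by
  rw [neg_one_pow_eq_pow_mod_two, neg_one_pow_eq_pow_mod_two (a + b)]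
  congr 1
  omega

theorem Finset.sum_card_filter_lt {α β : Type*} [LinearOrder α] [AddCommMonoid β]
    (s : Finset α) (g : ℕ → β) : ∑ x ∈ s, g #{y ∈ s | y < x} = ∑ t ∈ range #s, g t := by
  induction s using Finset.induction_on_max with
  | empty => simp
  | insert a s ha ih =>
    have hnot : a ∉ s := fun h => lt_irrefl a (ha a h)
    have hrank : ∀ x ∈ s, #{y ∈ insert a s | y < x} = #{y ∈ s | y < x} := fun x hx => by
      rw [filter_insert, if_neg (not_lt.2 (ha x hx).le)]
    have htop : #{y ∈ insert a s | y < a} = #s := by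
      rw [filter_insert, if_neg (lt_irrefl a), filter_true_of_mem ha]
    rw [sum_insert hnot, card_insert_of_notMem hnot, sum_range_succ, htop,
      sum_congr rfl fun x hx => congrArg g (hrank x hx), ih, add_comm]

namespace StrictMono

theorem val_le {k m : ℕ} {s : Fin k → Fin m} (hs : StrictMono s) (j : Fin k) :
    (j : ℕ) ≤ s j := by
  have h := card_le_card (show (Iic j).image s ⊆ Iic (s j) from fun i hi => by
    obtain ⟨i', hi', rfl⟩ := mem_image.1 hi
    exact mem_Iic.2 (hs.monotone (mem_Iic.1 hi')))
  rwa [card_image_of_injective _ hs.injective, Fin.card_Iic, Fin.card_Iic,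
    Nat.add_le_add_iff_right] at h

theorem lt_iff_lt_card_filter {α : Type*} [LinearOrder α] {k : ℕ} {s : Fin k → α}
    (hs : StrictMono s) (x : α) (j : Fin k) :
    s j < x ↔ (j : ℕ) < #{i | s i < x} := by
  constructor
  · intro h
    have := card_le_card (show Iic j ⊆ ({i | s i < x} : Finset (Fin k)) from fun i hi =>
      mem_filter.2 ⟨mem_univ i, (hs.monotone (mem_Iic.1 hi)).trans_lt h⟩)
    rw [Fin.card_Iic] at this
    omega
  · intro h
    by_contra! h'
    have := card_le_card (show ({i | s i < x} : Finset (Fin k)) ⊆ Iio j from fun i hi =>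
      mem_Iio.2 (hs.lt_iff_lt.1 ((mem_filter.1 hi).2.trans_le h')))
    rw [Fin.card_Iio] at this
    omega

end StrictMono

namespace Fin

variable {m k : ℕ} {s : Fin k → Fin m}

theorem card_filter_forall_ne (hs : Function.Injective s) : #{l | ∀ j, s j ≠ l} = m - k := by
  have h := card_filter_add_card_filter_not (s := univ) (p := fun l : Fin m => ∀ j, s j ≠ l)
  have himage : ({l | ¬∀ j, s j ≠ l} : Finset (Fin m)) = univ.image s := by
    ext l
    simp
  rw [himage, card_image_of_injective _ hs, card_univ, card_univ, Fintype.card_fin,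
    Fintype.card_fin] at h
  omega

theorem card_filter_lt_add_card_filter_lt (hs : Function.Injective s) (l : Fin m) :
    #{j | s j < l} + #{i ∈ ({i | ∀ j, s j ≠ i} : Finset (Fin m)) | i < l} = l := by
  rw [← Fin.card_Iio l, ← card_filter_add_card_filter_not (s := Iio l)
    (p := fun i => ∀ j, s j ≠ i), add_comm]
  congr 1
  · congr 1
    ext i
    simp [and_comm]
  · rw [← card_image_of_injective _ hs]
    congr 1
    ext i
    simp only [mem_image, mem_filter, mem_univ, true_and, mem_Iio, not_forall, not_not]
    constructor
    · rintro ⟨j, hj, rfl⟩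
      exact ⟨hj, j, rfl⟩
    · rintro ⟨hi, j, rfl⟩
      exact ⟨j, hi, rfl⟩

end Fin

theorem AlternatingMap.finset_sum_apply {R M N ι α : Type*} [CommSemiring R] [AddCommMonoid M]
    [Module R M] [AddCommMonoid N] [Module R N] (t : Finset α) (f : α → M [⋀^ι]→ₗ[R] N)
    (v : ι → M) : (∑ a ∈ t, f a) v = ∑ a ∈ t, f a v := by
  classical
  induction t using Finset.induction_on with
  | empty => simp
  | insert a t ha ih => simp [Finset.sum_insert ha, ih]

theorem Module.Basis.ext_alternating_of_strictMono {ι R M N : Type*} [LinearOrder ι]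
    [CommRing R] [AddCommGroup M] [Module R M] [AddCommGroup N] [Module R N] {k : ℕ}
    {f g : M [⋀^Fin k]→ₗ[R] N} (e : Module.Basis ι R M)
    (h : ∀ s : Fin k → ι, StrictMono s → f (e ∘ s) = g (e ∘ s)) : f = g := by
  refine e.ext_alternating fun v hv => ?_
  have hsort : StrictMono (v ∘ Tuple.sort v) :=
    (Tuple.monotone_sort v).strictMono_of_injective (hv.comp (Tuple.sort v).injective)
  have := h _ hsort
  rw [← Function.comp_assoc, f.map_perm, g.map_perm] at this
  exact smul_left_cancel _ this

namespace AlternatingMap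

variable {R M N : Type*} [CommRing R] [AddCommGroup M] [Module R M] [AddCommGroup N] [Module R N]
  {k : ℕ} (f : M [⋀^Fin (k + 1)]→ₗ[R] N) {u : M}

theorem map_update_eq_zero_of_curryLeft_eq_zero (hu : f.curryLeft u = 0) (v : Fin (k + 1) → M)
    (i : Fin (k + 1)) : f (Function.update v i u) = 0 := by
  have h := f.map_perm (Function.update v i u) i.cycleRange.symm
  rw [← Fin.cons_removeNth_eq_comp_cycleRange_symm, Function.update_self] at h
  rw [← smul_eq_zero_iff_eq (Equiv.Perm.sign i.cycleRange.symm), ← h]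
  exact congrArg (fun g => g (i.removeNth (Function.update v i u))) hu

theorem map_add_smul_of_curryLeft_eq_zero (hu : f.curryLeft u = 0) (v : Fin (k + 1) → M)
    (c : Fin (k + 1) → R) : f (fun j => v j + c j • u) = f v := by
  classical
  have h := f.toMultilinearMap.map_add_univ v fun j => c j • u
  rw [Finset.sum_eq_single Finset.univ] at h
  · simpa [Finset.piecewise_univ, Pi.add_def] using h
  · intro S _ hS
    obtain ⟨j, hj⟩ : ∃ j, j ∉ S := by simpa [Finset.eq_univ_iff_forall] using hS
    rw [← Function.update_eq_self j (S.piecewise v _), Finset.piecewise_eq_of_notMem _ _ _ hj,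
      coe_multilinearMap, map_update_smul, map_update_eq_zero_of_curryLeft_eq_zero f hu,
      smul_zero]
  · simp

end AlternatingMap

section CullisForm

variable {F : Type*} [Field F] {m k : ℕ}

variable (F m k) in
open Classical in
noncomputable def cullisForm : (Fin m → F) [⋀^Fin k]→ₗ[F] F :=
  ∑ s : Fin k → Fin m, if StrictMono s then
    (-1 : F) ^ (∑ j : Fin k, ((s j : ℕ) - (j : ℕ))) •
      Matrix.detRowAlternating.compLinearMap (LinearMap.funLeft F F s)
  else 0

theorem cullisDet_eq_cullisForm (X : Matrix (Fin m) (Fin k) F) :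
    cullisDet X = cullisForm F m k (fun j i => X i j) := by
  classical
  rw [cullisDet, cullisForm, AlternatingMap.finset_sum_apply]
  refine Finset.sum_congr rfl fun s _ => ?_
  split_ifs
  · rw [AlternatingMap.smul_apply, AlternatingMap.compLinearMap_apply, smul_eq_mul,
      ← Matrix.det_transpose]
    rfl
  · rfl

theorem cullisForm_single {s : Fin k → Fin m} (hs : StrictMono s) :
    cullisForm F m k (fun j => Pi.single (s j) 1) =
      (-1) ^ (∑ j, (s j : ℕ) + ∑ j : Fin k, (j : ℕ)) := by
  classical
  rw [← neg_one_pow_sub_eq_pow_add (sum_le_sum fun j _ => hs.val_le j),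
    ← sum_tsub_distrib _ fun j _ => hs.val_le j, cullisForm, AlternatingMap.finset_sum_apply,
    Finset.sum_eq_single s]
  · have hone : Matrix.of (fun j => LinearMap.funLeft F F s (Pi.single (s j) 1)) = 1 := by
      ext i j
      simp [Matrix.one_apply, Pi.single_apply, hs.injective.eq_iff, eq_comm]
    rw [if_pos hs, AlternatingMap.smul_apply, AlternatingMap.compLinearMap_apply, smul_eq_mul]
    change _ * Matrix.det (Matrix.of fun j => LinearMap.funLeft F F s (Pi.single (s j) 1)) = _
    rw [hone, Matrix.det_one, mul_one]
  · intro f _ hfs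
    split_ifs with hf
    · obtain ⟨j, hj⟩ : ∃ j, s j ∉ Set.range f := by
        by_contra! h
        refine hfs ((hf.range_inj hs).1 (Set.eq_of_subset_of_ncard_le
          (Set.range_subset_iff.2 h) ?_).symm)
        rw [Set.ncard_range_of_injective hs.injective, Set.ncard_range_of_injective hf.injective]
      rw [AlternatingMap.smul_apply, AlternatingMap.compLinearMap_apply, smul_eq_mul]
      change _ * Matrix.det (Matrix.of fun i => LinearMap.funLeft F F f (Pi.single (s i) 1)) = 0
      rw [Matrix.det_eq_zero_of_row_eq_zero j fun t => ?_, mul_zero]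
      simpa [Pi.single_apply] using fun h => hj ⟨t, h⟩
    · rfl
  · simp

theorem cullisDet_mul_eq_of_forall_strictMono {m' : ℕ} (M : Matrix (Fin m') (Fin m) F) (c : F)
    (h : ∀ s : Fin k → Fin m, StrictMono s →
      cullisDet (M.submatrix id s) * c = (-1) ^ (∑ j, (s j : ℕ) + ∑ j : Fin k, (j : ℕ)))
    (V : Matrix (Fin m) (Fin k) F) : cullisDet (M * V) * c = cullisDet V := by
  have hform : c • (cullisForm F m' k).compLinearMap M.mulVecLin = cullisForm F m k := by
    refine (Pi.basisFun F (Fin m)).ext_alternating_of_strictMono fun s hs => ?_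
    have hcol : (fun j => M.mulVecLin (Pi.basisFun F (Fin m) (s j))) =
        fun j i => M.submatrix id s i j := by
      ext j i
      simp
    rw [AlternatingMap.smul_apply, AlternatingMap.compLinearMap_apply, Function.comp_def, hcol,
      ← cullisDet_eq_cullisForm, smul_eq_mul, mul_comm, h s hs]
    simp only [Pi.basisFun_apply, cullisForm_single hs]
  have hcol : (fun j i => (M * V) i j) = fun j => M.mulVecLin fun i => V i j := by
    ext j i
    simp [Matrix.mul_apply, Matrix.mulVec, dotProduct]
  rw [cullisDet_eq_cullisForm, cullisDet_eq_cullisForm, ← hform, hcol, mul_comm]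
  rfl

theorem cullisDet_one_submatrix {s : Fin k → Fin m} (hs : StrictMono s) :
    cullisDet ((1 : Matrix (Fin m) (Fin m) F).submatrix id s) =
      (-1) ^ (∑ j, (s j : ℕ) + ∑ j : Fin k, (j : ℕ)) := by
  rw [cullisDet_eq_cullisForm, ← cullisForm_single hs]
  congr
  ext j i
  simp [Matrix.one_apply, Pi.single_apply]

variable {n : ℕ}

theorem Lplus_eq_one_mul (Y : Matrix (Fin (n - 1)) (Fin k) F) :
    (Lplus Y : Matrix (Fin n) (Fin k) F) =
      Lplus (1 : Matrix (Fin (n - 1)) (Fin (n - 1)) F) * Y := by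
  ext i j
  by_cases hi : (i : ℕ) < n - 1
  · simp [Lplus, hi, Matrix.one_apply, Matrix.mul_apply]
  · simp [Lplus, hi, Matrix.mul_apply]

theorem cullisDet_Lplus (Y : Matrix (Fin (n - 1)) (Fin k) F) :
    cullisDet (Lplus Y : Matrix (Fin n) (Fin k) F) = cullisDet Y := by
  rw [Lplus_eq_one_mul, ← mul_one (cullisDet (_ * Y))]
  refine cullisDet_mul_eq_of_forall_strictMono _ 1 (fun s hs => ?_) Y
  have hsub : (Lplus (1 : Matrix (Fin (n - 1)) (Fin (n - 1)) F)).submatrix id s =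
      (1 : Matrix (Fin n) (Fin n) F).submatrix id (Fin.castLE (Nat.sub_le n 1) ∘ s) := by
    ext i j
    by_cases hi : (i : ℕ) < n - 1
    · simp [Lplus, hi, Matrix.one_apply, Fin.ext_iff]
    · simp [Lplus, hi, Matrix.one_apply, Fin.ext_iff]
      omega
  rw [hsub, mul_one, cullisDet_one_submatrix ((Fin.strictMono_castLE _).comp hs)]
  rfl

theorem cullisForm_vecCons_single {s : Fin k → Fin m} (hs : StrictMono s) {l : Fin m}
    (hl : ∀ j, s j ≠ l) :
    cullisForm F m (k + 1) (Matrix.vecCons (Pi.single l 1) fun j => Pi.single (s j) 1) =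
      (-1) ^ (#{j | s j < l} + l + ∑ j, (s j : ℕ) + ∑ j : Fin (k + 1), (j : ℕ)) := by
  set r : Fin (k + 1) := ⟨#{j | s j < l}, Nat.lt_succ_of_le (card_le_univ _ |>.trans_eq
    (Fintype.card_fin k))⟩
  have hr : ∀ j : Fin k, s j < l ↔ j.castSucc < r := fun j => hs.lt_iff_lt_card_filter l j
  have ht : StrictMono (r.insertNth l s) := (Fin.strictMono_insertNth_iff r l s).2
    ⟨hs, fun j hj => (hr j).2 hj,
      fun j hj => lt_of_le_of_ne (not_lt.1 ((hr j).not.2 (not_lt.2 hj))) (hl j).symm⟩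
  -- the cycle moves the column `e_l` from the front to its sorted position `r`
  have hcols : (Matrix.vecCons (Pi.single l 1) fun j => Pi.single (s j) 1) =
      (fun j => (Pi.single ((r.insertNth l s : Fin (k + 1) → Fin m) j) 1 : Fin m → F)) ∘
        r.cycleRange.symm := by
    ext j : 1
    cases j using Fin.cases <;> simp
  rw [hcols, AlternatingMap.map_perm, cullisForm_single ht, Equiv.Perm.sign_symm,
    Fin.sign_cycleRange, Fin.sum_univ_succAbove _ r]
  simp only [Fin.insertNth_apply_same, Fin.insertNth_apply_succAbove, Units.smul_def,
    zsmul_eq_mul]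
  push_cast
  rw [← pow_add, add_assoc, add_assoc, add_assoc]

theorem cullisForm_curryLeft_one (hmk : Even (m + k)) :
    (cullisForm F m (k + 1)).curryLeft 1 = 0 := by
  classical
  refine (Pi.basisFun F (Fin m)).ext_alternating_of_strictMono fun s hs => ?_
  set c : Finset (Fin m) := {l | ∀ j, s j ≠ l}
  rw [← univ_sum_single (1 : Fin m → F), map_sum, AlternatingMap.finset_sum_apply,
    AlternatingMap.zero_apply]
  simp only [AlternatingMap.curryLeft_apply_apply, Function.comp_def, Pi.basisFun_apply,
    Pi.one_apply]
  rw [← sum_filter_of_ne (p := fun l => ∀ j, s j ≠ l) fun l _ hl => ?_]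
  · rw [sum_congr rfl fun l hl => cullisForm_vecCons_single hs (mem_filter.1 hl).2]
    -- `#{j | s j < l} + l` has the parity of the rank of `l` in the complement `c` of `range s`
    have hpar : ∀ l ∈ c,
        (-1 : F) ^ (#{j | s j < l} + l + ∑ j, (s j : ℕ) + ∑ j : Fin (k + 1), (j : ℕ)) =
          (-1) ^ (∑ j, (s j : ℕ) + ∑ j : Fin (k + 1), (j : ℕ)) * (-1) ^ #{i ∈ c | i < l} := by
      intro l _
      rw [← pow_add, neg_one_pow_eq_pow_mod_two, neg_one_pow_eq_pow_mod_two (_ + _)]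
      have : #{j | s j < l} + #{i ∈ c | i < l} = l :=
        Fin.card_filter_lt_add_card_filter_lt hs.injective l
      congr 1
      omega
    have hkm : k ≤ m := by simpa using Fintype.card_le_of_injective s hs.injective
    rw [sum_congr rfl hpar, ← mul_sum, sum_card_filter_lt c fun t => (-1 : F) ^ t,
      neg_one_geom_sum, Fin.card_filter_forall_ne hs.injective,
      if_pos ((Nat.even_sub hkm).2 (Nat.even_add.1 hmk)), mul_zero]
  · intro j hj
    exact hl ((cullisForm F m (k + 1)).map_eq_zero_of_eq _ (i := 0) (j := j.succ) (by simp [hj])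
      (Fin.succ_ne_zero j).symm)

theorem Lminus_eq_one_mul (X : Matrix (Fin n) (Fin k) F) :
    Lminus X = Lminus (1 : Matrix (Fin n) (Fin n) F) * X := by
  ext i j
  simp [Lminus, sub_mul, Matrix.mul_apply, Matrix.one_apply, Finset.sum_sub_distrib]

theorem cullisDet_Lminus (hn : 0 < n) (hk : 0 < k) (hnk : Odd (n + k))
    (X : Matrix (Fin n) (Fin k) F) : cullisDet (Lminus X) = cullisDet X := by
  obtain ⟨k, rfl⟩ := Nat.exists_eq_succ_of_ne_zero hk.ne'
  have hcols : (fun j i => (Lplus (Lminus X) : Matrix (Fin n) (Fin (k + 1)) F) i j) =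
      fun j => (fun i => X i j) + (-X ⟨n - 1, Nat.sub_lt hn one_pos⟩ j) • (1 : Fin n → F) := by
    ext j i
    by_cases hi : (i : ℕ) < n - 1
    · simp [Lplus, Lminus, hi, sub_eq_add_neg]
    · obtain rfl : i = ⟨n - 1, Nat.sub_lt hn one_pos⟩ := Fin.ext (by simp only; omega)
      simp [Lplus]
  have heven : Even (n + k) := by
    rcases hnk with ⟨t, ht⟩
    exact ⟨t, by omega⟩
  rw [← cullisDet_Lplus (n := n), cullisDet_eq_cullisForm, cullisDet_eq_cullisForm, hcols,
    AlternatingMap.map_add_smul_of_curryLeft_eq_zero _ (cullisForm_curryLeft_one heven)]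

end CullisForm

theorem neg_one_pow_sum_sub_eq_orderEmbOfFin {R : Type*} [Ring R] {m k : ℕ}
    (d : Finset (Fin m)) (hd : #d = k) :
    (-1 : R) ^ ((∑ i ∈ d, (i : ℕ)) - ∑ j : Fin k, (j : ℕ)) =
      (-1) ^ (∑ j, (d.orderEmbOfFin hd j : ℕ) + ∑ j : Fin k, (j : ℕ)) := by
  have hsum : ∑ i ∈ d, (i : ℕ) = ∑ j, (d.orderEmbOfFin hd j : ℕ) := by
    conv_lhs => rw [← image_orderEmbOfFin_univ d hd]
    exact sum_image fun a _ b _ hab => (d.orderEmbOfFin hd).injective hab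
  rw [hsum, neg_one_pow_sub_eq_pow_add
    (sum_le_sum fun j _ => (d.orderEmbOfFin hd).strictMono.val_le j)]

theorem stmt12_general {F : Type*} [Field F] {n k : ℕ} (hk : 1 ≤ k) (hkn : k < n)
    (hodd : Odd (n + k))
    (S : Matrix (Fin (n - 1)) (Fin k) F →ₗ[F] Matrix (Fin (n - 1)) (Fin k) F)
    (A' : Matrix (Fin (n - 1)) (Fin (n - 1)) F) (B' : Matrix (Fin k) (Fin k) F)
    (hA'B' : ∀ (d : Finset (Fin (n - 1))) (hd : d.card = k),
      cullisDet (A'.submatrix id (fun j => d.orderEmbOfFin hd j)) * B'.det =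
        (-1 : F) ^ ((∑ i ∈ d, (i : ℕ)) - ∑ j : Fin k, (j : ℕ)))
    (hS : ∀ Y, S Y = A' * Y * B') :
    ∃ (A : Matrix (Fin n) (Fin n) F) (B : Matrix (Fin k) (Fin k) F),
      (∀ (d : Finset (Fin n)) (hd : d.card = k),
        cullisDet (A.submatrix id (fun j => d.orderEmbOfFin hd j)) * B.det =
          (-1 : F) ^ ((∑ i ∈ d, (i : ℕ)) - ∑ j : Fin k, (j : ℕ))) ∧
      ∀ X : Matrix (Fin n) (Fin k) F, Lplus (S (Lminus X)) = A * X * B := by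
  have hA' : ∀ V : Matrix (Fin (n - 1)) (Fin k) F,
      cullisDet (A' * V) * B'.det = cullisDet V := by
    refine cullisDet_mul_eq_of_forall_strictMono A' B'.det fun s hs => ?_
    have hcard : #(univ.image s) = k := by
      rw [card_image_of_injective _ hs.injective, card_univ, Fintype.card_fin]
    have h := hA'B' (univ.image s) hcard
    rwa [neg_one_pow_sum_sub_eq_orderEmbOfFin _ hcard, ← orderEmbOfFin_unique hcard
      (fun j => mem_image_of_mem s (mem_univ j)) hs] at h
  obtain ⟨Q, hQ⟩ : ∃ Q, ∀ Y : Matrix (Fin (n - 1)) (Fin k) F,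
      (Lplus Y : Matrix (Fin n) (Fin k) F) = Q * Y := ⟨_, Lplus_eq_one_mul⟩
  obtain ⟨P, hP⟩ : ∃ P, ∀ X : Matrix (Fin n) (Fin k) F, Lminus X = P * X :=
    ⟨_, Lminus_eq_one_mul⟩
  refine ⟨Q * A' * P, B', fun d hd => ?_, fun X => ?_⟩
  · set s : Fin k → Fin n := fun j => d.orderEmbOfFin hd j
    have hsub : (Q * A' * P).submatrix id s =
        Lplus (A' * Lminus ((1 : Matrix (Fin n) (Fin n) F).submatrix id s)) := by
      rw [hP, hQ, ← Matrix.mul_assoc, ← Matrix.mul_assoc]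
      exact (Matrix.mul_submatrix_one (Equiv.refl (Fin n)) s _).symm
    rw [hsub, cullisDet_Lplus, hA', cullisDet_Lminus (by omega) (by omega) hodd,
      cullisDet_one_submatrix (d.orderEmbOfFin hd).strictMono,
      neg_one_pow_sum_sub_eq_orderEmbOfFin]
  · rw [hS, hP, hQ]
    simp only [Matrix.mul_assoc]

/-- Lemma 4.11: lifting a two-sided multiplication preserver from size
`(n-1) × k` to size `n × k` via `T = L⁺ ∘ S ∘ L⁻`. -/
theorem stmt12 {F : Type*} [Field F] {n k : ℕ} (hk : 1 ≤ k) (hkn : k < n)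
    (hodd : Odd (n + k)) (hF : (k : Cardinal) < Cardinal.mk F)
    (S : Matrix (Fin (n - 1)) (Fin k) F →ₗ[F] Matrix (Fin (n - 1)) (Fin k) F)
    (A' : Matrix (Fin (n - 1)) (Fin (n - 1)) F) (B' : Matrix (Fin k) (Fin k) F)
    (hA'B' : ∀ (d : Finset (Fin (n - 1))) (hd : d.card = k),
      cullisDet (A'.submatrix id (fun j => d.orderEmbOfFin hd j)) * B'.det =
        (-1 : F) ^ ((∑ i ∈ d, (i : ℕ)) - ∑ j : Fin k, (j : ℕ)))
    (hS : ∀ Y, S Y = A' * Y * B') :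
    ∃ (A : Matrix (Fin n) (Fin n) F) (B : Matrix (Fin k) (Fin k) F),
      (∀ (d : Finset (Fin n)) (hd : d.card = k),
        cullisDet (A.submatrix id (fun j => d.orderEmbOfFin hd j)) * B.det =
          (-1 : F) ^ ((∑ i ∈ d, (i : ℕ)) - ∑ j : Fin k, (j : ℕ))) ∧
      ∀ X : Matrix (Fin n) (Fin k) F, Lplus (S (Lminus X)) = A * X * B :=
  stmt12_general hk hkn hodd S A' B' hA'B' hS
end

section
/- Let F be a field, n ≥ k ≥ 1, and let A, B be n×k matrices over F. Then for every λ ∈ F, det_{n,k}(A + λB) = Σ_{d=0}^{k} λ^d · Σ_{1 ≤ i_1 < ... < i_d ≤ k} det_{n,k}(C_{i_1,...,i_d}), where C_{i_1,...,i_d} is the n×k matrix obtained from A by replacing its columns with indices i_1, ..., i_d by the corresponding columns of B. -/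
open Matrix in
lemma det_add_smul' {F : Type*} [Field F] {k : ℕ} (M N : Matrix (Fin k) (Fin k) F) (l : F) :
    (M + l • N).det = ∑ s : Finset (Fin k), l ^ s.card *
      Matrix.det (fun i j => if j ∈ s then N i j else M i j) := by
  rw [← Matrix.det_transpose]
  have h1 : (M + l • N)ᵀ = (l • N)ᵀ + Mᵀ := by rw [Matrix.transpose_add, add_comm]
  rw [h1]
  show (Matrix.detRowAlternating ((l • N)ᵀ + Mᵀ)) = _
  erw [(Matrix.detRowAlternating (R := F) (n := Fin k)).toMultilinearMap.map_add_univ ((l • N)ᵀ) Mᵀ]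
  refine Finset.sum_congr rfl fun s _ => ?_
  have h2 : (s.piecewise ((l • N)ᵀ : Matrix (Fin k) (Fin k) F) Mᵀ)
      = s.piecewise (fun i => l • (s.piecewise (Nᵀ : Matrix (Fin k) (Fin k) F) Mᵀ) i)
        (s.piecewise Nᵀ Mᵀ) := by
    ext i j
    by_cases h : i ∈ s <;>
      simp [Finset.piecewise_eq_of_mem _ _ _ , Finset.piecewise, h, Matrix.smul_apply]
  rw [h2, (Matrix.detRowAlternating (R := F) (n := Fin k)).toMultilinearMap.map_piecewise_smul
    (fun _ => l) _ s]
  rw [Finset.prod_const, smul_eq_mul]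
  congr 1
  show Matrix.det (s.piecewise (Nᵀ : Matrix (Fin k) (Fin k) F) Mᵀ) = _
  refine (Matrix.det_transpose _).symm.trans ?_
  congr 1
  ext i j
  change s.piecewise (Nᵀ : Matrix (Fin k) (Fin k) F) Mᵀ j i = _
  by_cases h : j ∈ s <;> simp [Matrix.transpose_apply, Finset.piecewise, h]

/-- Corollary 2.10: the binomial expansion of `det_{n,k}(A + λB)` with respect
to columns. -/
theorem stmt13 {F : Type*} [Field F] {n k : ℕ} (hk : 1 ≤ k) (hkn : k ≤ n)
    (A B : Matrix (Fin n) (Fin k) F) (l : F) :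
    cullisDet (A + l • B) =
      ∑ d ∈ Finset.range (k + 1), l ^ d *
        ∑ s ∈ Finset.univ.filter (fun s : Finset (Fin k) => s.card = d),
          cullisDet (fun (i : Fin n) (j : Fin k) => if j ∈ s then B i j else A i j) := by
  classical
  set C : Finset (Fin k) → Matrix (Fin n) (Fin k) F :=
    fun s => fun (i : Fin n) (j : Fin k) => if j ∈ s then B i j else A i j with hC
  have key : ∀ f : Fin k → Fin n,
      (if StrictMono f then
        (-1 : F) ^ (∑ j : Fin k, ((f j : ℕ) - (j : ℕ))) * ((A + l • B).submatrix f id).det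
      else 0)
      = ∑ s : Finset (Fin k), l ^ s.card *
        (if StrictMono f then
          (-1 : F) ^ (∑ j : Fin k, ((f j : ℕ) - (j : ℕ))) * ((C s).submatrix f id).det
        else 0) := by
    intro f
    by_cases hf : StrictMono f
    · simp only [hf, if_true]
      have hsub : (A + l • B).submatrix f id
          = A.submatrix f id + l • B.submatrix f id := by
        ext i j; simp [Matrix.submatrix_apply]
      rw [hsub, det_add_smul', Finset.mul_sum]
      refine Finset.sum_congr rfl fun s _ => ?_
      have hdet : Matrix.det (fun i j =>
            if j ∈ s then (B.submatrix f id) i j else (A.submatrix f id) i j)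
          = ((C s).submatrix f id).det := rfl
      rw [hdet]; ring
    · simp [hf]
  calc cullisDet (A + l • B)
      = ∑ f : Fin k → Fin n, ∑ s : Finset (Fin k), l ^ s.card *
        (if StrictMono f then
          (-1 : F) ^ (∑ j : Fin k, ((f j : ℕ) - (j : ℕ))) * ((C s).submatrix f id).det
        else 0) := Finset.sum_congr rfl (fun f _ => key f)
    _ = ∑ s : Finset (Fin k), l ^ s.card * cullisDet (C s) := by
        rw [Finset.sum_comm]
        refine Finset.sum_congr rfl fun s _ => ?_
        rw [cullisDet, Finset.mul_sum]
    _ = ∑ d ∈ Finset.range (k + 1), ∑ s ∈ Finset.univ.filter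
          (fun s : Finset (Fin k) => s.card = d), l ^ s.card * cullisDet (C s) := by
        rw [Finset.sum_fiberwise_of_maps_to]
        intro s _
        have := s.card_le_univ
        simp only [Finset.card_univ, Fintype.card_fin] at this
        simpa [Nat.lt_succ_iff] using this
    _ = _ := by
        refine Finset.sum_congr rfl fun d _ => ?_
        rw [Finset.mul_sum]
        refine Finset.sum_congr rfl fun s hs => ?_
        rw [(Finset.mem_filter.mp hs).2]
end

section
/- Let F be a field and n ≥ k ≥ 1. Then for every n×k matrix X over F and every k×k matrix Y over F, det_{n,k}(XY) = det_{n,k}(X) · det(Y). -/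
theorem Matrix.det_submatrix_mul_rows {R ι m : Type*} [CommRing R] [Fintype ι] [DecidableEq ι]
    (X : Matrix m ι R) (Y : Matrix ι ι R) (f : ι → m) :
    ((X * Y).submatrix f id).det = (X.submatrix f id).det * Y.det := by
  rw [Matrix.submatrix_mul X Y f id id Function.bijective_id, Matrix.submatrix_id_id,
    Matrix.det_mul]

theorem stmt15_general {F : Type*} [Field F] {n k : ℕ}
    (X : Matrix (Fin n) (Fin k) F) (Y : Matrix (Fin k) (Fin k) F) :
    cullisDet (X * Y) = cullisDet X * Y.det := by
  unfold cullisDet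
  rw [Finset.sum_mul]
  refine Finset.sum_congr rfl fun f _ => ?_
  split_ifs <;> simp [Matrix.det_submatrix_mul_rows, mul_assoc]

/-- Lemma 2.11: multiplicativity of the Cullis determinant with respect to
right multiplication by a square matrix. -/
theorem stmt15 {F : Type*} [Field F] {n k : ℕ} (hk : 1 ≤ k) (hkn : k ≤ n)
    (X : Matrix (Fin n) (Fin k) F) (Y : Matrix (Fin k) (Fin k) F) :
    cullisDet (X * Y) = cullisDet X * Y.det :=
  stmt15_general X Y
end
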